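/- arXiv:1911.08109 — 10 statements merged into one kernel-verified Lean document; each statement's English description precedes it below -/
import Mathlib

section
/- Let A, C ∈ ℂ^{n×n} be Hermitian matrices that have no common eigenvector, i.e., there is no nonzero x ∈ ℂ^n that is simultaneously an eigenvector of A and an eigenvector of C. Then the function μ ↦ λ_1(μ) (the largest eigenvalue of A − μC) is strictly convex on ℝ, and the function μ ↦ λ_n(μ) (the smallest eigenvalue of A − μC) is strictly concave on ℝ. -/
open Matrix

variable {n : ℕ}

/-- The eigenvalues of a Hermitian matrix, sorted in decreasing order:
index `0` is the largest, index `n-1` the smallest. -/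
noncomputable def sortedEig {n : ℕ} {M : Matrix (Fin n) (Fin n) ℂ} (hM : M.IsHermitian) :
    Fin n → ℝ :=
  fun i => (hM.eigenvalues ∘ Tuple.sort hM.eigenvalues) i.rev

/-- The parameter matrix `H(μ) = A - μ C`. -/
noncomputable def pencil {n : ℕ} (A C : Matrix (Fin n) (Fin n) ℂ) (μ : ℝ) :
    Matrix (Fin n) (Fin n) ℂ :=
  A - (μ : ℂ) • C

theorem pencil_isHermitian {n : ℕ} {A C : Matrix (Fin n) (Fin n) ℂ}
    (hA : A.IsHermitian) (hC : C.IsHermitian) (μ : ℝ) :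
    (pencil A C μ).IsHermitian := by
  unfold pencil
  refine hA.sub ?_
  unfold Matrix.IsHermitian at *
  rw [Matrix.conjTranspose_smul, hC]
  simp

namespace EigAux

open Finset

local notation "E" => EuclideanSpace ℂ (Fin n)

variable {M : Matrix (Fin n) (Fin n) ℂ} (hM : M.IsHermitian)

lemma inner_basis_mulVec (x : E) (i : Fin n) :
    (inner ℂ (hM.eigenvectorBasis i) (WithLp.toLp 2 (M *ᵥ x) : E) : ℂ) =
      (hM.eigenvalues i : ℂ) * inner ℂ (hM.eigenvectorBasis i) x := by
  rw [EuclideanSpace.inner_eq_star_dotProduct, EuclideanSpace.inner_eq_star_dotProduct]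
  simp only [WithLp.ofLp_toLp]
  rw [dotProduct_comm, dotProduct_comm x.ofLp]
  have h1 : star (M *ᵥ ⇑(hM.eigenvectorBasis i)) = star ⇑(hM.eigenvectorBasis i) ᵥ* M := by
    rw [star_mulVec, hM.eq]
  have h2 := hM.mulVec_eigenvectorBasis i
  calc dotProduct (star ((hM.eigenvectorBasis i) : Fin n → ℂ)) (M *ᵥ x)
      = (star ⇑(hM.eigenvectorBasis i) ᵥ* M) ⬝ᵥ x := by rw [dotProduct_mulVec]
    _ = star (M *ᵥ ⇑(hM.eigenvectorBasis i)) ⬝ᵥ x := by rw [h1]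
    _ = (hM.eigenvalues i : ℂ) * dotProduct (star ⇑(hM.eigenvectorBasis i)) x := by
        rw [h2]
        simp [star_smul, smul_dotProduct, Complex.real_smul]

lemma rayleigh_eq_sum (x : E) :
    (inner ℂ x (WithLp.toLp 2 (M *ᵥ x) : E) : ℂ).re =
      ∑ i, hM.eigenvalues i * ‖(inner ℂ (hM.eigenvectorBasis i) x : ℂ)‖ ^ 2 := by
  rw [← (hM.eigenvectorBasis).sum_inner_mul_inner x (WithLp.toLp 2 (M *ᵥ x) : E), Complex.re_sum]
  refine Finset.sum_congr rfl fun i _ => ?_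
  have hc : (inner ℂ x (hM.eigenvectorBasis i) : ℂ)
      = starRingEnd ℂ (inner ℂ (hM.eigenvectorBasis i) x) := (inner_conj_symm _ _).symm
  rw [inner_basis_mulVec hM x i, hc]
  set c : ℂ := inner ℂ (hM.eigenvectorBasis i) x with hcdef
  simp only [Complex.mul_re, Complex.mul_im, Complex.conj_re, Complex.conj_im,
    Complex.ofReal_re, Complex.ofReal_im, Complex.sq_norm,
    Complex.normSq_apply]
  ring

lemma norm_sq_eq_sum (x : E) :
    ‖x‖ ^ 2 = ∑ i, ‖(inner ℂ (hM.eigenvectorBasis i) x : ℂ)‖ ^ 2 := by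
  have h0 : ‖x‖ ^ 2 = (inner ℂ x x : ℂ).re := (inner_self_eq_norm_sq (𝕜 := ℂ) x).symm
  rw [h0, ← (hM.eigenvectorBasis).sum_inner_mul_inner x x, Complex.re_sum]
  refine Finset.sum_congr rfl fun i _ => ?_
  have hc : (inner ℂ x (hM.eigenvectorBasis i) : ℂ)
      = starRingEnd ℂ (inner ℂ (hM.eigenvectorBasis i) x) := (inner_conj_symm _ _).symm
  rw [hc]
  simp only [Complex.mul_re, Complex.conj_re, Complex.conj_im,
    Complex.sq_norm, Complex.normSq_apply]
  ring

lemma eigen_of_coeffs {t : ℝ} (x : E)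
    (h : ∀ i, hM.eigenvalues i ≠ t → (inner ℂ (hM.eigenvectorBasis i) x : ℂ) = 0) :
    M *ᵥ x = (t : ℂ) • (x : Fin n → ℂ) := by
  have key : (WithLp.toLp 2 (M *ᵥ x) : E) = ((t : ℂ) • x : E) := by
    rw [← (hM.eigenvectorBasis).sum_repr' (WithLp.toLp 2 (M *ᵥ x) : E),
        ← (hM.eigenvectorBasis).sum_repr' ((t : ℂ) • x : E)]
    refine Finset.sum_congr rfl fun i _ => ?_
    rw [inner_basis_mulVec hM x i, inner_smul_right]
    by_cases hi : hM.eigenvalues i = t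
    · rw [hi]
    · rw [h i hi]; simp
  exact congrArg WithLp.ofLp key

/-- Rayleigh upper bound with equality case: if `t` bounds all eigenvalues above, the
Rayleigh quotient is at most `t`, with equality only for eigenvectors. -/
lemma max_bound {t : ℝ} (ht : ∀ i, hM.eigenvalues i ≤ t) (x : E) :
    (inner ℂ x (WithLp.toLp 2 (M *ᵥ x) : E) : ℂ).re ≤ t * ‖x‖ ^ 2 ∧
      ((inner ℂ x (WithLp.toLp 2 (M *ᵥ x) : E) : ℂ).re = t * ‖x‖ ^ 2 → M *ᵥ x = (t : ℂ) • (x : Fin n → ℂ)) := by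
  have hA := rayleigh_eq_sum hM x
  have hB := norm_sq_eq_sum hM x
  have hkey : t * ‖x‖ ^ 2 - (inner ℂ x (WithLp.toLp 2 (M *ᵥ x) : E) : ℂ).re
      = ∑ i, (t - hM.eigenvalues i) * ‖(inner ℂ (hM.eigenvectorBasis i) x : ℂ)‖ ^ 2 := by
    rw [hA, hB, Finset.mul_sum, ← Finset.sum_sub_distrib]
    exact Finset.sum_congr rfl fun i _ => by ring
  have hnn : ∀ i ∈ Finset.univ,
      0 ≤ (t - hM.eigenvalues i) * ‖(inner ℂ (hM.eigenvectorBasis i) x : ℂ)‖ ^ 2 :=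
    fun i _ => mul_nonneg (sub_nonneg.2 (ht i)) (sq_nonneg _)
  have hsum := Finset.sum_nonneg hnn
  constructor
  · linarith [hkey ▸ hsum]
  · intro heq
    have hzero : ∑ i, (t - hM.eigenvalues i) * ‖(inner ℂ (hM.eigenvectorBasis i) x : ℂ)‖ ^ 2
        = 0 := by rw [← hkey, heq]; ring
    have hall := (Finset.sum_eq_zero_iff_of_nonneg hnn).mp hzero
    refine eigen_of_coeffs hM x fun i hi => ?_
    have := hall i (Finset.mem_univ i)
    have hpos : 0 < t - hM.eigenvalues i := lt_of_le_of_ne (sub_nonneg.2 (ht i))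
      (fun h => hi (by linarith [h.symm]))
    have : ‖(inner ℂ (hM.eigenvectorBasis i) x : ℂ)‖ ^ 2 = 0 := by
      rcases mul_eq_zero.mp this with h | h
      · exact absurd h (ne_of_gt hpos)
      · exact h
    simpa using this

/-- Rayleigh lower bound with equality case. -/
lemma min_bound {t : ℝ} (ht : ∀ i, t ≤ hM.eigenvalues i) (x : E) :
    t * ‖x‖ ^ 2 ≤ (inner ℂ x (WithLp.toLp 2 (M *ᵥ x) : E) : ℂ).re ∧
      ((inner ℂ x (WithLp.toLp 2 (M *ᵥ x) : E) : ℂ).re = t * ‖x‖ ^ 2 → M *ᵥ x = (t : ℂ) • (x : Fin n → ℂ)) := by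
  have hA := rayleigh_eq_sum hM x
  have hB := norm_sq_eq_sum hM x
  have hkey : (inner ℂ x (WithLp.toLp 2 (M *ᵥ x) : E) : ℂ).re - t * ‖x‖ ^ 2
      = ∑ i, (hM.eigenvalues i - t) * ‖(inner ℂ (hM.eigenvectorBasis i) x : ℂ)‖ ^ 2 := by
    rw [hA, hB, Finset.mul_sum, ← Finset.sum_sub_distrib]
    exact Finset.sum_congr rfl fun i _ => by ring
  have hnn : ∀ i ∈ Finset.univ,
      0 ≤ (hM.eigenvalues i - t) * ‖(inner ℂ (hM.eigenvectorBasis i) x : ℂ)‖ ^ 2 :=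
    fun i _ => mul_nonneg (sub_nonneg.2 (ht i)) (sq_nonneg _)
  have hsum := Finset.sum_nonneg hnn
  constructor
  · linarith [hkey ▸ hsum]
  · intro heq
    have hzero : ∑ i, (hM.eigenvalues i - t) * ‖(inner ℂ (hM.eigenvectorBasis i) x : ℂ)‖ ^ 2
        = 0 := by rw [← hkey, heq]; ring
    have hall := (Finset.sum_eq_zero_iff_of_nonneg hnn).mp hzero
    refine eigen_of_coeffs hM x fun i hi => ?_
    have := hall i (Finset.mem_univ i)
    have hpos : 0 < hM.eigenvalues i - t := lt_of_le_of_ne (sub_nonneg.2 (ht i))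
      (fun h => hi (by linarith [h.symm]))
    have : ‖(inner ℂ (hM.eigenvectorBasis i) x : ℂ)‖ ^ 2 = 0 := by
      rcases mul_eq_zero.mp this with h | h
      · exact absurd h (ne_of_gt hpos)
      · exact h
    simpa using this

lemma sortedEig_top (hn : 0 < n) :
    ∃ j, sortedEig hM ⟨0, hn⟩ = hM.eigenvalues j ∧
      ∀ i, hM.eigenvalues i ≤ sortedEig hM ⟨0, hn⟩ := by
  have hrev : (⟨0, hn⟩ : Fin n).rev = ⟨n - 1, Nat.sub_lt hn one_pos⟩ := by
    ext; rw [Fin.val_rev]; simp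
  refine ⟨Tuple.sort hM.eigenvalues ⟨n - 1, Nat.sub_lt hn one_pos⟩, ?_, ?_⟩
  · unfold sortedEig; rw [hrev]; rfl
  · intro i
    unfold sortedEig; rw [hrev]
    have h1 : hM.eigenvalues i
        = (hM.eigenvalues ∘ Tuple.sort hM.eigenvalues) ((Tuple.sort hM.eigenvalues)⁻¹ i) := by
      simp
    rw [h1]
    exact Tuple.monotone_sort hM.eigenvalues
      (by rw [Fin.le_def]; exact Nat.le_sub_one_of_lt (Fin.is_lt _))

lemma sortedEig_bot (hn : 0 < n) :
    ∃ j, sortedEig hM ⟨n - 1, Nat.sub_lt hn one_pos⟩ = hM.eigenvalues j ∧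
      ∀ i, sortedEig hM ⟨n - 1, Nat.sub_lt hn one_pos⟩ ≤ hM.eigenvalues i := by
  have hrev : (⟨n - 1, Nat.sub_lt hn one_pos⟩ : Fin n).rev = ⟨0, hn⟩ := by
    ext; rw [Fin.val_rev]; simp; omega
  refine ⟨Tuple.sort hM.eigenvalues ⟨0, hn⟩, ?_, ?_⟩
  · unfold sortedEig; rw [hrev]; rfl
  · intro i
    unfold sortedEig; rw [hrev]
    have h1 : hM.eigenvalues i
        = (hM.eigenvalues ∘ Tuple.sort hM.eigenvalues) ((Tuple.sort hM.eigenvalues)⁻¹ i) := by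
      simp
    rw [h1]
    exact Tuple.monotone_sort hM.eigenvalues (by rw [Fin.le_def]; exact Nat.zero_le _)

lemma pencil_mulVec (A C : Matrix (Fin n) (Fin n) ℂ) (μ : ℝ) (x : Fin n → ℂ) :
    pencil A C μ *ᵥ x = A *ᵥ x - (μ : ℂ) • (C *ᵥ x) := by
  unfold pencil
  rw [sub_mulVec, smul_mulVec]

lemma rayleigh_pencil (A C : Matrix (Fin n) (Fin n) ℂ) (μ : ℝ) (x : E) :
    (inner ℂ x (WithLp.toLp 2 (pencil A C μ *ᵥ x) : E) : ℂ).re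
      = (inner ℂ x (WithLp.toLp 2 (A *ᵥ x) : E) : ℂ).re - μ * (inner ℂ x (WithLp.toLp 2 (C *ᵥ x) : E) : ℂ).re := by
  have h : (WithLp.toLp 2 (pencil A C μ *ᵥ x) : E) = ((WithLp.toLp 2 (A *ᵥ x) : E) - (μ : ℂ) • (WithLp.toLp 2 (C *ᵥ x) : E) : E) := by
    exact congrArg (WithLp.toLp 2) (pencil_mulVec A C μ x)
  rw [h, inner_sub_right, inner_smul_right]
  simp [Complex.sub_re, Complex.mul_re]

/-- If `x` is an eigenvector of two distinct members of the pencil, then `A` and `C`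
have a common eigenvector. -/
lemma common_of_two_eigen {A C : Matrix (Fin n) (Fin n) ℂ} {μ₁ μ₂ : ℝ} (hne : μ₁ ≠ μ₂)
    {x : Fin n → ℂ} (hx : x ≠ 0) {t₁ t₂ : ℝ}
    (h1 : pencil A C μ₁ *ᵥ x = (t₁ : ℂ) • x) (h2 : pencil A C μ₂ *ᵥ x = (t₂ : ℂ) • x) :
    ∃ x : Fin n → ℂ, x ≠ 0 ∧ (∃ a : ℂ, A *ᵥ x = a • x) ∧ (∃ c : ℂ, C *ᵥ x = c • x) := by
  rw [pencil_mulVec] at h1 h2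
  have hd : (μ₂ : ℂ) - (μ₁ : ℂ) ≠ 0 := by
    intro h
    exact hne (by exact_mod_cast (sub_eq_zero.mp h).symm)
  set c : ℂ := ((t₁ : ℂ) - t₂) / ((μ₂ : ℂ) - μ₁) with hcdef
  have hCx : C *ᵥ x = c • x := by
    funext i
    have h1i := congrFun h1 i
    have h2i := congrFun h2 i
    simp only [Pi.sub_apply, Pi.smul_apply, smul_eq_mul] at h1i h2i ⊢
    rw [hcdef]
    field_simp
    linear_combination h1i - h2i
  have hAx : A *ᵥ x = ((t₁ : ℂ) + (μ₁ : ℂ) * c) • x := by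
    funext i
    have h1i := congrFun h1 i
    have hCxi := congrFun hCx i
    simp only [Pi.sub_apply, Pi.smul_apply, smul_eq_mul] at h1i hCxi ⊢
    linear_combination h1i + (μ₁ : ℂ) * hCxi
  exact ⟨x, hx, ⟨_, hAx⟩, ⟨_, hCx⟩⟩

end EigAux

/-- If Hermitian `A, C` have no common eigenvector, then the
largest sorted eigencurve `μ ↦ λ₁(μ)` of `A - μC` is strictly convex on `ℝ`
and the smallest sorted eigencurve `μ ↦ λₙ(μ)` is strictly concave on `ℝ`. -/
theorem strictConvex_largest_and_strictConcave_smallest_eigencurve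
    {n : ℕ} (hn : 0 < n) (A C : Matrix (Fin n) (Fin n) ℂ)
    (hA : A.IsHermitian) (hC : C.IsHermitian)
    (hnocommon : ¬ ∃ x : Fin n → ℂ, x ≠ 0 ∧
      (∃ a : ℂ, A *ᵥ x = a • x) ∧ (∃ c : ℂ, C *ᵥ x = c • x)) :
    StrictConvexOn ℝ Set.univ
      (fun μ : ℝ => sortedEig (pencil_isHermitian hA hC μ) ⟨0, hn⟩) ∧
    StrictConcaveOn ℝ Set.univ
      (fun μ : ℝ => sortedEig (pencil_isHermitian hA hC μ) ⟨n - 1, Nat.sub_lt hn one_pos⟩) := by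
  constructor
  · refine ⟨convex_univ, ?_⟩
    rintro μ₁ - μ₂ - hne a b ha hb hab
    simp only [smul_eq_mul]
    set f : ℝ → ℝ := fun μ : ℝ => sortedEig (pencil_isHermitian hA hC μ) ⟨0, hn⟩ with hf
    set μ : ℝ := a * μ₁ + b * μ₂ with hμ
    obtain ⟨j, hje, hjb⟩ := EigAux.sortedEig_top (pencil_isHermitian hA hC μ) hn
    obtain ⟨j₁, hje₁, hjb₁⟩ := EigAux.sortedEig_top (pencil_isHermitian hA hC μ₁) hn
    obtain ⟨j₂, hje₂, hjb₂⟩ := EigAux.sortedEig_top (pencil_isHermitian hA hC μ₂) hn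
    set x : EuclideanSpace ℂ (Fin n) := (pencil_isHermitian hA hC μ).eigenvectorBasis j with hx
    have hnorm : ‖x‖ = 1 := (pencil_isHermitian hA hC μ).eigenvectorBasis.orthonormal.1 j
    have hx0 : x ≠ 0 := by
      intro h; rw [h, norm_zero] at hnorm; exact one_ne_zero hnorm.symm
    have heig : pencil A C μ *ᵥ x = ((f μ : ℝ) : ℂ) • (x : Fin n → ℂ) := by
      have h := (pencil_isHermitian hA hC μ).mulVec_eigenvectorBasis j
      rw [show f μ = (pencil_isHermitian hA hC μ).eigenvalues j from hje]
      refine Eq.trans h ?_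
      funext i
      simp [Complex.real_smul, hx]
    have hxx : (inner ℂ x x : ℂ).re = 1 := by
      have h0 : ‖x‖ ^ 2 = (inner ℂ x x : ℂ).re := (inner_self_eq_norm_sq (𝕜 := ℂ) x).symm
      rw [hnorm] at h0; simpa using h0.symm
    have hq : (inner ℂ x (WithLp.toLp 2 (pencil A C μ *ᵥ x) : EuclideanSpace ℂ (Fin n)) : ℂ).re = f μ := by
      rw [show (WithLp.toLp 2 (pencil A C μ *ᵥ x) : EuclideanSpace ℂ (Fin n)) = (((f μ : ℝ) : ℂ) • x) from congrArg (WithLp.toLp 2) heig,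
        inner_smul_right, Complex.mul_re, Complex.ofReal_re, Complex.ofReal_im, hxx]
      ring
    have haff := EigAux.rayleigh_pencil A C μ x
    have haff1 := EigAux.rayleigh_pencil A C μ₁ x
    have haff2 := EigAux.rayleigh_pencil A C μ₂ x
    have hb1 := EigAux.max_bound (pencil_isHermitian hA hC μ₁) hjb₁ x
    have hb2 := EigAux.max_bound (pencil_isHermitian hA hC μ₂) hjb₂ x
    simp only [hnorm, one_pow, mul_one] at hb1 hb2
    have hcomb : f μ = a * (inner ℂ x (WithLp.toLp 2 (pencil A C μ₁ *ᵥ x) : EuclideanSpace ℂ (Fin n)) : ℂ).re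
        + b * (inner ℂ x (WithLp.toLp 2 (pencil A C μ₂ *ᵥ x) : EuclideanSpace ℂ (Fin n)) : ℂ).re := by
      rw [← hq, haff, haff1, haff2, hμ]
      linear_combination (-(inner ℂ x (WithLp.toLp 2 (A *ᵥ x) : EuclideanSpace ℂ (Fin n)) : ℂ).re) * hab
    have hle : f μ ≤ a * f μ₁ + b * f μ₂ := by
      rw [hcomb]
      exact add_le_add (mul_le_mul_of_nonneg_left hb1.1 ha.le)
        (mul_le_mul_of_nonneg_left hb2.1 hb.le)
    rcases eq_or_lt_of_le hle with heq | hlt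
    · exfalso
      set q₁ := (inner ℂ x (WithLp.toLp 2 (pencil A C μ₁ *ᵥ x) : EuclideanSpace ℂ (Fin n)) : ℂ).re with hq₁def
      set q₂ := (inner ℂ x (WithLp.toLp 2 (pencil A C μ₂ *ᵥ x) : EuclideanSpace ℂ (Fin n)) : ℂ).re with hq₂def
      have hsum : a * q₁ + b * q₂ = a * f μ₁ + b * f μ₂ := by rw [← hcomb]; exact heq
      have hq1 : q₁ = f μ₁ := by
        by_contra hne1
        have h1 : a * q₁ < a * f μ₁ :=
          mul_lt_mul_of_pos_left (lt_of_le_of_ne hb1.1 hne1) ha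
        have h2 : b * q₂ ≤ b * f μ₂ := mul_le_mul_of_nonneg_left hb2.1 hb.le
        linarith only [h1, h2, hsum]
      have hq2 : q₂ = f μ₂ := by
        by_contra hne2
        have h2 : b * q₂ < b * f μ₂ :=
          mul_lt_mul_of_pos_left (lt_of_le_of_ne hb2.1 hne2) hb
        have h1 : a * q₁ ≤ a * f μ₁ := mul_le_mul_of_nonneg_left hb1.1 ha.le
        linarith only [h1, h2, hsum]
      exact hnocommon (EigAux.common_of_two_eigen hne (fun h => hx0 (by simpa using congrArg (WithLp.toLp 2) h)) (hb1.2 hq1) (hb2.2 hq2))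
    · exact hlt
  · refine ⟨convex_univ, ?_⟩
    rintro μ₁ - μ₂ - hne a b ha hb hab
    simp only [smul_eq_mul]
    set f : ℝ → ℝ := fun μ : ℝ =>
      sortedEig (pencil_isHermitian hA hC μ) ⟨n - 1, Nat.sub_lt hn one_pos⟩ with hf
    set μ : ℝ := a * μ₁ + b * μ₂ with hμ
    obtain ⟨j, hje, hjb⟩ := EigAux.sortedEig_bot (pencil_isHermitian hA hC μ) hn
    obtain ⟨j₁, hje₁, hjb₁⟩ := EigAux.sortedEig_bot (pencil_isHermitian hA hC μ₁) hn
    obtain ⟨j₂, hje₂, hjb₂⟩ := EigAux.sortedEig_bot (pencil_isHermitian hA hC μ₂) hn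
    set x : EuclideanSpace ℂ (Fin n) := (pencil_isHermitian hA hC μ).eigenvectorBasis j with hx
    have hnorm : ‖x‖ = 1 := (pencil_isHermitian hA hC μ).eigenvectorBasis.orthonormal.1 j
    have hx0 : x ≠ 0 := by
      intro h; rw [h, norm_zero] at hnorm; exact one_ne_zero hnorm.symm
    have heig : pencil A C μ *ᵥ x = ((f μ : ℝ) : ℂ) • (x : Fin n → ℂ) := by
      have h := (pencil_isHermitian hA hC μ).mulVec_eigenvectorBasis j
      rw [show f μ = (pencil_isHermitian hA hC μ).eigenvalues j from hje]
      refine Eq.trans h ?_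
      funext i
      simp [Complex.real_smul, hx]
    have hxx : (inner ℂ x x : ℂ).re = 1 := by
      have h0 : ‖x‖ ^ 2 = (inner ℂ x x : ℂ).re := (inner_self_eq_norm_sq (𝕜 := ℂ) x).symm
      rw [hnorm] at h0; simpa using h0.symm
    have hq : (inner ℂ x (WithLp.toLp 2 (pencil A C μ *ᵥ x) : EuclideanSpace ℂ (Fin n)) : ℂ).re = f μ := by
      rw [show (WithLp.toLp 2 (pencil A C μ *ᵥ x) : EuclideanSpace ℂ (Fin n)) = (((f μ : ℝ) : ℂ) • x) from congrArg (WithLp.toLp 2) heig,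
        inner_smul_right, Complex.mul_re, Complex.ofReal_re, Complex.ofReal_im, hxx]
      ring
    have haff := EigAux.rayleigh_pencil A C μ x
    have haff1 := EigAux.rayleigh_pencil A C μ₁ x
    have haff2 := EigAux.rayleigh_pencil A C μ₂ x
    have hb1 := EigAux.min_bound (pencil_isHermitian hA hC μ₁) hjb₁ x
    have hb2 := EigAux.min_bound (pencil_isHermitian hA hC μ₂) hjb₂ x
    simp only [hnorm, one_pow, mul_one] at hb1 hb2
    have hcomb : f μ = a * (inner ℂ x (WithLp.toLp 2 (pencil A C μ₁ *ᵥ x) : EuclideanSpace ℂ (Fin n)) : ℂ).re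
        + b * (inner ℂ x (WithLp.toLp 2 (pencil A C μ₂ *ᵥ x) : EuclideanSpace ℂ (Fin n)) : ℂ).re := by
      rw [← hq, haff, haff1, haff2, hμ]
      linear_combination (-(inner ℂ x (WithLp.toLp 2 (A *ᵥ x) : EuclideanSpace ℂ (Fin n)) : ℂ).re) * hab
    have hle : a * f μ₁ + b * f μ₂ ≤ f μ := by
      rw [hcomb]
      exact add_le_add (mul_le_mul_of_nonneg_left hb1.1 ha.le)
        (mul_le_mul_of_nonneg_left hb2.1 hb.le)
    rcases eq_or_lt_of_le hle with heq | hlt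
    · exfalso
      set q₁ := (inner ℂ x (WithLp.toLp 2 (pencil A C μ₁ *ᵥ x) : EuclideanSpace ℂ (Fin n)) : ℂ).re with hq₁def
      set q₂ := (inner ℂ x (WithLp.toLp 2 (pencil A C μ₂ *ᵥ x) : EuclideanSpace ℂ (Fin n)) : ℂ).re with hq₂def
      have hsum : a * q₁ + b * q₂ = a * f μ₁ + b * f μ₂ := by rw [← hcomb]; exact heq.symm
      have hq1 : q₁ = f μ₁ := by
        by_contra hne1
        have h1 : a * f μ₁ < a * q₁ :=
          mul_lt_mul_of_pos_left (lt_of_le_of_ne hb1.1 (fun h => hne1 h.symm)) ha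
        have h2 : b * f μ₂ ≤ b * q₂ := mul_le_mul_of_nonneg_left hb2.1 hb.le
        linarith only [h1, h2, hsum]
      have hq2 : q₂ = f μ₂ := by
        by_contra hne2
        have h2 : b * f μ₂ < b * q₂ :=
          mul_lt_mul_of_pos_left (lt_of_le_of_ne hb2.1 (fun h => hne2 h.symm)) hb
        have h1 : a * f μ₁ ≤ a * q₁ := mul_le_mul_of_nonneg_left hb1.1 ha.le
        linarith only [h1, h2, hsum]
      exact hnocommon (EigAux.common_of_two_eigen hne (fun h => hx0 (by simpa using congrArg (WithLp.toLp 2) h)) (hb1.2 hq1) (hb2.2 hq2))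
    · exact hlt
end

section
/- Let A, C ∈ ℂ^{n×n} be Hermitian, μ_0 ∈ ℝ, and let λ_0 ∈ ℝ be an eigenvalue of A − μ_0C of multiplicity k. Suppose λ_1, …, λ_k : ℝ → ℝ and x_1, …, x_k : ℝ → ℂ^n satisfy: (A − μC)x_j(μ) = λ_j(μ)x_j(μ) for all μ in a neighborhood of μ_0; each λ_j is differentiable at μ_0 with λ_j(μ_0) = λ_0; each x_j is continuous at μ_0; and the vectors x_1(μ_0), …, x_k(μ_0) are orthonormal (hence form an orthonormal basis of the eigenspace of λ_0 for A − μ_0C). Let X_k = [x_1(μ_0), …, x_k(μ_0)] ∈ ℂ^{n×k}. Then x_i(μ_0)^H C x_j(μ_0) = −λ_j'(μ_0) δ_{ij} for all 1 ≤ i, j ≤ k; equivalently X_k^H C X_k = −diag(λ_1'(μ_0), …, λ_k'(μ_0)), so the derivatives λ_1'(μ_0), …, λ_k'(μ_0) are exactly the eigenvalues of −X_k^H C X_k counting multiplicities. -/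
/-!
Pair the eigenvector `u = xᵢ(μ₀)` with the eigencurve `xⱼ(μ)`. Since `A - μ₀C` is Hermitian, `u`
is also a left eigenvector for `λ₀`, and writing `A - μC = (A - μ₀C) - (μ - μ₀)C` gives
`(μ - μ₀) uᴴCxⱼ(μ) = (λ₀ - λⱼ(μ)) uᴴxⱼ(μ)` near `μ₀`. Dividing by `μ - μ₀` and letting `μ → μ₀`
turns the difference quotient into `-λⱼ'(μ₀)`, so `uᴴCxⱼ(μ₀) = -λⱼ'(μ₀) uᴴxⱼ(μ₀) = -λⱼ'(μ₀) δᵢⱼ`.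
-/

open Matrix

/-- `(μ, λ, x)` is a 2D-eigentriple of the pair `(A, C)`:
`(A - μC)x = λx`, `xᴴCx = 0` and `xᴴx = 1`. -/
def Is2DEigentriple {n : ℕ} (A C : Matrix (Fin n) (Fin n) ℂ) (μ lam : ℝ)
    (x : Fin n → ℂ) : Prop :=
  (A - (μ : ℂ) • C) *ᵥ x = (lam : ℂ) • x ∧ star x ⬝ᵥ (C *ᵥ x) = 0 ∧ star x ⬝ᵥ x = 1

/-- `(μ, λ)` is a 2D-eigenvalue of the pair `(A, C)`. -/
def Is2DEigenvalue {n : ℕ} (A C : Matrix (Fin n) (Fin n) ℂ) (μ lam : ℝ) : Prop :=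
  ∃ x : Fin n → ℂ, Is2DEigentriple A C μ lam x

/-- A Hermitian matrix is indefinite: it has a positive and a negative eigenvalue. -/
def IsIndefinite {n : ℕ} {M : Matrix (Fin n) (Fin n) ℂ} (hM : M.IsHermitian) : Prop :=
  (∃ i, 0 < hM.eigenvalues i) ∧ (∃ j, hM.eigenvalues j < 0)

open Filter Topology

theorem Matrix.IsHermitian.star_dotProduct_mulVec_of_mulVec_eq_smul {R m : Type*}
    [CommSemiring R] [StarRing R] [Fintype m] {M : Matrix m m R} (hM : M.IsHermitian)
    {u : m → R} {c : R} (hu : M *ᵥ u = c • u) (v : m → R) :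
    star u ⬝ᵥ (M *ᵥ v) = star c * (star u ⬝ᵥ v) := by
  have hleft : star u ᵥ* M = star c • star u := by
    rw [← star_smul, ← hu, star_mulVec, hM]
  rw [dotProduct_mulVec, hleft, smul_dotProduct, smul_eq_mul]

theorem pencil_sub_pencil {n : ℕ} (A C : Matrix (Fin n) (Fin n) ℂ) (μ μ₀ : ℝ) :
    pencil A C μ = pencil A C μ₀ - ((μ - μ₀ : ℝ) : ℂ) • C := by
  unfold pencil
  push_cast
  rw [sub_smul]
  abel

theorem sub_smul_star_dotProduct_mulVec_eq_of_pencil {n : ℕ} {A C : Matrix (Fin n) (Fin n) ℂ}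
    (hA : A.IsHermitian) (hC : C.IsHermitian) {μ₀ μ lam₀ : ℝ} {c : ℂ} {u v : Fin n → ℂ}
    (hu : pencil A C μ₀ *ᵥ u = (lam₀ : ℂ) • u) (hv : pencil A C μ *ᵥ v = c • v) :
    (μ - μ₀) • (star u ⬝ᵥ (C *ᵥ v)) = ((lam₀ : ℂ) - c) * (star u ⬝ᵥ v) := by
  have hpair := (pencil_isHermitian hA hC μ₀).star_dotProduct_mulVec_of_mulVec_eq_smul hu v
  have hexpand := congrArg (star u ⬝ᵥ ·) hv
  simp only [pencil_sub_pencil A C μ μ₀, sub_mulVec, dotProduct_sub, hpair, smul_mulVec,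
    dotProduct_smul, Complex.star_def, Complex.conj_ofReal, smul_eq_mul] at hexpand
  rw [Complex.real_smul]
  linear_combination -hexpand

theorem eq_neg_mul_of_sub_smul_eq_mul {𝕜 𝕜' : Type*} [NontriviallyNormedField 𝕜]
    [NormedRing 𝕜'] [NormedAlgebra 𝕜 𝕜'] {f g ℓ : 𝕜 → 𝕜'} {a : 𝕜} {L : 𝕜'}
    (hf : ContinuousAt f a) (hg : ContinuousAt g a) (hℓ : HasDerivAt ℓ L a)
    (h : ∀ᶠ t in 𝓝 a, (t - a) • f t = (ℓ a - ℓ t) * g t) :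
    f a = -L * g a := by
  have hslope : ∀ᶠ t in 𝓝[≠] a, -slope ℓ a t * g t = f t := by
    filter_upwards [nhdsWithin_le_nhds h, self_mem_nhdsWithin] with t ht hta
    have hne : t - a ≠ 0 := sub_ne_zero.mpr hta
    rw [slope_def_module, ← smul_neg, neg_sub, smul_mul_assoc, ← ht, inv_smul_smul₀ hne]
  have hlim : Tendsto f (𝓝[≠] a) (𝓝 (-L * g a)) :=
    ((hasDerivAt_iff_tendsto_slope.mp hℓ).neg.mul hg.continuousWithinAt.tendsto).congr' hslope
  exact tendsto_nhds_unique hf.continuousWithinAt.tendsto hlim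

theorem derivatives_of_eigencurves_at_multiple_eigenvalue_general
    {n k : ℕ} (A C : Matrix (Fin n) (Fin n) ℂ)
    (hA : A.IsHermitian) (hC : C.IsHermitian) (μ₀ lam₀ : ℝ)
    (lam : Fin k → ℝ → ℝ) (x : Fin k → ℝ → (Fin n → ℂ))
    (heig : ∀ j : Fin k, ∀ᶠ μ : ℝ in nhds μ₀,
      (A - (μ : ℂ) • C) *ᵥ x j μ = (lam j μ : ℂ) • x j μ)
    (hdiff : ∀ j : Fin k, DifferentiableAt ℝ (lam j) μ₀)
    (hval : ∀ j : Fin k, lam j μ₀ = lam₀)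
    (hcont : ∀ j : Fin k, ContinuousAt (x j) μ₀)
    (horth : ∀ i j : Fin k, star (x i μ₀) ⬝ᵥ x j μ₀ = if i = j then 1 else 0) :
    ∀ i j : Fin k, star (x i μ₀) ⬝ᵥ (C *ᵥ x j μ₀) =
      if i = j then -((deriv (lam j) μ₀ : ℝ) : ℂ) else 0 := by
  intro i j
  have hu : pencil A C μ₀ *ᵥ x i μ₀ = (lam₀ : ℂ) • x i μ₀ := by
    simpa only [pencil, hval i] using (heig i).self_of_nhds
  have hrel : ∀ᶠ μ in 𝓝 μ₀, (μ - μ₀) • (star (x i μ₀) ⬝ᵥ (C *ᵥ x j μ)) =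
      ((lam j μ₀ : ℂ) - lam j μ) * (star (x i μ₀) ⬝ᵥ x j μ) := by
    filter_upwards [heig j] with μ hμ
    rw [hval j]
    exact sub_smul_star_dotProduct_mulVec_eq_of_pencil hA hC hu hμ
  have hCx : ContinuousAt (fun μ => star (x i μ₀) ⬝ᵥ (C *ᵥ x j μ)) μ₀ := by
    have := hcont j
    fun_prop
  have hx : ContinuousAt (fun μ => star (x i μ₀) ⬝ᵥ x j μ) μ₀ := by
    have := hcont j
    fun_prop
  rw [eq_neg_mul_of_sub_smul_eq_mul hCx hx (hdiff j).hasDerivAt.ofReal_comp hrel, horth]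
  split_ifs <;> simp

/-- Let `A, C` be Hermitian, `μ₀ ∈ ℝ`, and `lam₀` an eigenvalue of
`A - μ₀C` of multiplicity `k`.  Given differentiable eigenvalue functions
`lam j` and continuous eigenvector functions `x j` (for `j = 1, …, k`) with
`(A - μC) (x j μ) = (lam j μ) (x j μ)` near `μ₀`, `lam j μ₀ = lam₀`, and
`x 1 μ₀, …, x k μ₀` orthonormal, one has
`(x i μ₀)ᴴ C (x j μ₀) = -(lam j)'(μ₀) δᵢⱼ`, i.e. `X_kᴴ C X_k` is the diagonal
matrix of the `-(lam j)'(μ₀)`; hence the derivatives `(lam j)'(μ₀)` are exactly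
the eigenvalues of `-X_kᴴ C X_k` counting multiplicities. -/
theorem derivatives_of_eigencurves_at_multiple_eigenvalue
    {n k : ℕ} (A C : Matrix (Fin n) (Fin n) ℂ)
    (hA : A.IsHermitian) (hC : C.IsHermitian) (μ₀ lam₀ : ℝ)
    (hmult : Module.finrank ℂ
      (Module.End.eigenspace (Matrix.mulVecLin (A - (μ₀ : ℂ) • C)) (lam₀ : ℂ)) = k)
    (lam : Fin k → ℝ → ℝ) (x : Fin k → ℝ → (Fin n → ℂ))
    (heig : ∀ j : Fin k, ∀ᶠ μ : ℝ in nhds μ₀,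
      (A - (μ : ℂ) • C) *ᵥ x j μ = (lam j μ : ℂ) • x j μ)
    (hdiff : ∀ j : Fin k, DifferentiableAt ℝ (lam j) μ₀)
    (hval : ∀ j : Fin k, lam j μ₀ = lam₀)
    (hcont : ∀ j : Fin k, ContinuousAt (x j) μ₀)
    (horth : ∀ i j : Fin k, star (x i μ₀) ⬝ᵥ x j μ₀ = if i = j then 1 else 0) :
    ∀ i j : Fin k, star (x i μ₀) ⬝ᵥ (C *ᵥ x j μ₀) =
      if i = j then -((deriv (lam j) μ₀ : ℝ) : ℂ) else 0 :=
  derivatives_of_eigencurves_at_multiple_eigenvalue_general A C hA hC μ₀ lam₀ lam x heig hdiff hval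
    hcont horth
end

section
/- Let A, C ∈ ℂ^{n×n} be Hermitian and let λ_A be an eigenvalue of A of multiplicity k. Suppose λ̃_1, …, λ̃_k : ℝ → ℝ and x_1, …, x_k : ℝ → ℂ^n satisfy: (A − εC)x_j(ε) = λ̃_j(ε)x_j(ε) for all ε in a neighborhood of 0; each λ̃_j is differentiable at 0 with λ̃_j(0) = λ_A; each x_j is continuous at 0; and x_1(0), …, x_k(0) are orthonormal (hence an orthonormal basis of the eigenspace of λ_A for A). Let X_k = [x_1(0), …, x_k(0)]. Then there exist τ_1, …, τ_k, which are exactly the eigenvalues of X_k^H C X_k counting multiplicities, such that λ̃_j(ε) = λ_A − τ_j ε + o(ε) as ε → 0, for j = 1, …, k. -/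
open Matrix

open Filter Topology

/-! Pairing the eigenvalue equation of `x j` with the left eigenvector `(x i 0)ᴴ` of `A` gives
`(λⱼ(ε) - λ₀) ⟨x i 0, x j ε⟩ = -ε ⟨x i 0, C x j ε⟩`. Dividing by `ε` and letting `ε → 0` yields
`λⱼ'(0) δᵢⱼ = -(X_kᴴ C X_k)ᵢⱼ`: the compressed matrix is diagonal with entries `τⱼ = -λⱼ'(0)`. -/

theorem HasDerivAt.smul_eq_of_eventually_smul_eq {E : Type*} [NormedAddCommGroup E]
    [NormedSpace ℝ E] {φ : ℝ → ℝ} {d : ℝ} {f g : ℝ → E} (hφ : HasDerivAt φ d 0)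
    (hφ0 : φ 0 = 0) (hf : ContinuousAt f 0) (hg : ContinuousAt g 0)
    (h : ∀ᶠ ε in 𝓝 0, φ ε • f ε = ε • g ε) : d • f 0 = g 0 := by
  have hslope : Tendsto (fun ε => slope φ 0 ε • f ε) (𝓝[≠] 0) (𝓝 (d • f 0)) :=
    (hasDerivAt_iff_tendsto_slope.mp hφ).smul (hf.tendsto.mono_left nhdsWithin_le_nhds)
  refine tendsto_nhds_unique hslope ((hg.tendsto.mono_left nhdsWithin_le_nhds).congr' ?_)
  filter_upwards [nhdsWithin_le_nhds h, self_mem_nhdsWithin] with ε hε hne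
  rw [slope_def_field, hφ0, sub_zero, sub_zero, div_eq_inv_mul, mul_smul, hε,
    inv_smul_smul₀ (show ε ≠ 0 from hne)]

theorem Matrix.IsHermitian.star_vecMul_eq_smul {𝕜 n : Type*} [RCLike 𝕜] [Fintype n]
    {A : Matrix n n 𝕜} (hA : A.IsHermitian) {r : ℝ} {v : n → 𝕜}
    (hv : A *ᵥ v = (r : 𝕜) • v) : star v ᵥ* A = (r : 𝕜) • star v := by
  rw [← hA.eq, ← star_mulVec, hv, star_smul, RCLike.star_def, RCLike.conj_ofReal]

theorem Matrix.conjTranspose_mul_mul_apply_of_columns {R m n : Type*} [Fintype m] [CommSemiring R]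
    [StarRing R] (C : Matrix m m R) (v : n → m → R) (i j : n) :
    ((of fun a b => v b a)ᴴ * C * of fun a b => v b a) i j = star (v i) ⬝ᵥ (C *ᵥ v j) := by
  rw [Matrix.mul_assoc, mul_apply]
  simp [mul_apply, mulVec, dotProduct]

theorem Matrix.deriv_mul_dotProduct_eq_of_eigencurve {n : Type*} [Fintype n]
    {A C : Matrix n n ℂ} {lam₀ d : ℝ} {lam : ℝ → ℝ} {w : ℝ → n → ℂ} {u : n → ℂ}
    (hu : u ᵥ* A = (lam₀ : ℂ) • u)
    (heig : ∀ᶠ ε : ℝ in 𝓝 0, (A - (ε : ℂ) • C) *ᵥ w ε = (lam ε : ℂ) • w ε)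
    (hlam : HasDerivAt lam d 0) (hlam0 : lam 0 = lam₀) (hw : ContinuousAt w 0) :
    (d : ℂ) * (u ⬝ᵥ w 0) = -(u ⬝ᵥ (C *ᵥ w 0)) := by
  have key := (hlam.sub_const lam₀).smul_eq_of_eventually_smul_eq (by simp [hlam0])
    (f := fun ε => u ⬝ᵥ w ε) (g := fun ε => -(u ⬝ᵥ (C *ᵥ w ε)))
    ((by fun_prop : Continuous fun v => u ⬝ᵥ v).continuousAt.comp hw)
    ((by fun_prop : Continuous fun v => -(u ⬝ᵥ (C *ᵥ v))).continuousAt.comp hw) ?_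
  · simpa [Complex.real_smul] using key
  filter_upwards [heig] with ε hε
  have hpair := congrArg (u ⬝ᵥ ·) hε
  simp only [sub_mulVec, smul_mulVec, dotProduct_sub, dotProduct_smul, smul_eq_mul,
    dotProduct_mulVec u A, hu, smul_dotProduct] at hpair
  simp only [Complex.real_smul, Complex.ofReal_sub]
  linear_combination -hpair

theorem first_order_expansion_of_eigencurves_general
    {n k : ℕ} (A C : Matrix (Fin n) (Fin n) ℂ)
    (hA : A.IsHermitian) (lam₀ : ℝ)
    (lam : Fin k → ℝ → ℝ) (x : Fin k → ℝ → (Fin n → ℂ))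
    (heig : ∀ j : Fin k, ∀ᶠ ε : ℝ in nhds 0,
      (A - (ε : ℂ) • C) *ᵥ x j ε = (lam j ε : ℂ) • x j ε)
    (hdiff : ∀ j : Fin k, DifferentiableAt ℝ (lam j) 0)
    (hval : ∀ j : Fin k, lam j 0 = lam₀)
    (hcont : ∀ j : Fin k, ContinuousAt (x j) 0)
    (horth : ∀ i j : Fin k, star (x i 0) ⬝ᵥ x j 0 = if i = j then 1 else 0) :
    ∃ τ : Fin k → ℝ,
      (Matrix.charpoly
          ((Matrix.of fun i j => x j 0 i)ᴴ * C * (Matrix.of fun i j => x j 0 i)) =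
        ∏ j : Fin k, (Polynomial.X - Polynomial.C ((τ j : ℝ) : ℂ))) ∧
      ∀ j : Fin k, HasDerivAt (lam j) (-(τ j)) 0 := by
  refine ⟨fun j => -deriv (lam j) 0, ?_, fun j => by simpa using (hdiff j).hasDerivAt⟩
  have hleft : ∀ i, star (x i 0) ᵥ* A = (lam₀ : ℂ) • star (x i 0) := fun i =>
    hA.star_vecMul_eq_smul (by simpa [hval i] using (heig i).self_of_nhds)
  have hentry : ∀ i j, star (x i 0) ⬝ᵥ (C *ᵥ x j 0) =
      if i = j then ((-deriv (lam j) 0 : ℝ) : ℂ) else 0 := fun i j => by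
    have h := deriv_mul_dotProduct_eq_of_eigencurve (hleft i) (heig j) (hdiff j).hasDerivAt
      (hval j) (hcont j)
    rw [horth i j] at h
    split_ifs at h ⊢ <;> push_cast <;> linear_combination h
  have hdiag : (Matrix.of fun i j => x j 0 i)ᴴ * C * (Matrix.of fun i j => x j 0 i) =
      diagonal fun j => ((-deriv (lam j) 0 : ℝ) : ℂ) := by
    ext i j
    rw [conjTranspose_mul_mul_apply_of_columns, hentry, diagonal_apply]
    split_ifs with hij <;> simp [hij]
  rw [hdiag, charpoly_diagonal]

/-- Let `A, C` be Hermitian and `lam₀` an eigenvalue of `A` of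
multiplicity `k`.  Given differentiable eigenvalue functions `lam j` and
continuous eigenvector functions `x j` of the pencil `A - εC` with
`lam j 0 = lam₀` and `x 1 0, …, x k 0` orthonormal, there exist
`τ 1, …, τ k`, which are exactly the eigenvalues of `X_kᴴ C X_k` counting
multiplicities (where `X_k = [x 1 0, …, x k 0]`), such that
`lam j ε = lam₀ - τ j • ε + o(ε)` as `ε → 0` for every `j`. -/
theorem first_order_expansion_of_eigencurves
    {n k : ℕ} (A C : Matrix (Fin n) (Fin n) ℂ)
    (hA : A.IsHermitian) (hC : C.IsHermitian) (lam₀ : ℝ)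
    (hmult : Module.finrank ℂ
      (Module.End.eigenspace (Matrix.mulVecLin A) (lam₀ : ℂ)) = k)
    (lam : Fin k → ℝ → ℝ) (x : Fin k → ℝ → (Fin n → ℂ))
    (heig : ∀ j : Fin k, ∀ᶠ ε : ℝ in nhds 0,
      (A - (ε : ℂ) • C) *ᵥ x j ε = (lam j ε : ℂ) • x j ε)
    (hdiff : ∀ j : Fin k, DifferentiableAt ℝ (lam j) 0)
    (hval : ∀ j : Fin k, lam j 0 = lam₀)
    (hcont : ∀ j : Fin k, ContinuousAt (x j) 0)
    (horth : ∀ i j : Fin k, star (x i 0) ⬝ᵥ x j 0 = if i = j then 1 else 0) :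
    ∃ τ : Fin k → ℝ,
      (Matrix.charpoly
          ((Matrix.of fun i j => x j 0 i)ᴴ * C * (Matrix.of fun i j => x j 0 i)) =
        ∏ j : Fin k, (Polynomial.X - Polynomial.C ((τ j : ℝ) : ℂ))) ∧
      ∀ j : Fin k, HasDerivAt (lam j) (-(τ j)) 0 :=
  first_order_expansion_of_eigencurves_general A C hA lam₀ lam x heig hdiff hval hcont horth
end

section
/- Let A, C ∈ ℂ^{n×n} be Hermitian, and for i ∈ {1, …, n} let λ_i(μ) denote the i-th largest eigenvalue of A − μC. If μ_* ∈ ℝ is a local minimum point or a local maximum point of the function μ ↦ λ_i(μ), and λ_* = λ_i(μ_*), then (μ_*, λ_*) is a 2D-eigenvalue of (A, C): there exists x ∈ ℂ^n with x^H x = 1, (A − μ_*C)x = λ_* x, and x^H C x = 0. -/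
open Matrix

namespace TwoDEig

open ComplexInnerProductSpace Finset

variable {n : ℕ} {M C : Matrix (Fin n) (Fin n) ℂ}

/-- Euclidean space alias. -/
abbrev V (n : ℕ) := EuclideanSpace ℂ (Fin n)

/-- Sorted eigenvectors: `sVec hM k` is a unit eigenvector for eigenvalue `sortedEig hM k`. -/
noncomputable def sVec (hM : M.IsHermitian) (k : Fin n) : V n :=
  hM.eigenvectorBasis (Tuple.sort hM.eigenvalues k.rev)

lemma sVec_orthonormal (hM : M.IsHermitian) : Orthonormal ℂ (sVec hM) :=
  hM.eigenvectorBasis.orthonormal.comp _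
    (((Tuple.sort hM.eigenvalues).injective).comp Fin.rev_injective)

lemma toEuclideanLin_sVec (hM : M.IsHermitian) (k : Fin n) :
    Matrix.toEuclideanLin M (sVec hM k) = (sortedEig hM k : ℂ) • sVec hM k :=
  congrArg (WithLp.equiv 2 (Fin n → ℂ)).symm
    (hM.mulVec_eigenvectorBasis (Tuple.sort hM.eigenvalues k.rev))

lemma sortedEig_antitone (hM : M.IsHermitian) : Antitone (sortedEig hM) :=
  fun _ _ h => Tuple.monotone_sort hM.eigenvalues (Fin.rev_le_rev.mpr h)

/-- The real quadratic form of a matrix. -/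
noncomputable def qf (M : Matrix (Fin n) (Fin n) ℂ) (x : V n) : ℝ :=
  Complex.re ⟪x, Matrix.toEuclideanLin M x⟫

lemma qf_eq_re_dot (M : Matrix (Fin n) (Fin n) ℂ) (x : V n) :
    qf M x = Complex.re (star (x : Fin n → ℂ) ⬝ᵥ (M *ᵥ x)) :=
  congrArg Complex.re (dotProduct_comm _ (star (x : Fin n → ℂ)))

/-- The span of the sorted eigenvectors indexed by `s`. -/
noncomputable def sp (hM : M.IsHermitian) (s : Finset (Fin n)) : Submodule ℂ (V n) :=
  Submodule.span ℂ (Set.range fun k : s => sVec hM k)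

lemma finrank_sp (hM : M.IsHermitian) (s : Finset (Fin n)) :
    Module.finrank ℂ (sp hM s) = s.card := by
  rw [sp, show (fun k : s => sVec hM k) = sVec hM ∘ (Subtype.val : s → Fin n) from rfl,
    finrank_span_eq_card ((sVec_orthonormal hM).linearIndependent.comp
    (Subtype.val : s → Fin n) Subtype.val_injective)]
  simp

lemma mem_sp (hM : M.IsHermitian) (s : Finset (Fin n)) {x : V n} (hx : x ∈ sp hM s) :
    ∃ c : Fin n → ℂ, x = ∑ k ∈ s, c k • sVec hM k := by
  rw [sp] at hx
  obtain ⟨c, hc⟩ := (Submodule.mem_span_range_iff_exists_fun ℂ).mp hx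
  refine ⟨fun k => if h : k ∈ s then c ⟨k, h⟩ else 0, ?_⟩
  rw [← hc, ← Finset.sum_attach s fun k => (if h : k ∈ s then c ⟨k, h⟩ else 0) • sVec hM k]
  exact Finset.sum_congr rfl fun k _ => by rw [dif_pos k.2]

lemma sum_mem_sp (hM : M.IsHermitian) (s : Finset (Fin n)) (c : Fin n → ℂ) :
    ∑ k ∈ s, c k • sVec hM k ∈ sp hM s :=
  Submodule.sum_mem _ fun k hk =>
    Submodule.smul_mem _ _ (Submodule.subset_span ⟨⟨k, hk⟩, rfl⟩)

lemma norm_sq_repr (hM : M.IsHermitian) (s : Finset (Fin n)) (c : Fin n → ℂ) :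
    ‖∑ k ∈ s, c k • sVec hM k‖ ^ 2 = ∑ k ∈ s, ‖c k‖ ^ 2 := by
  rw [← inner_self_eq_norm_sq (𝕜 := ℂ), (sVec_orthonormal hM).inner_sum c c s]
  simp [Complex.conj_mul', ← Complex.ofReal_pow]

lemma qf_repr (hM : M.IsHermitian) (s : Finset (Fin n)) (c : Fin n → ℂ) :
    qf M (∑ k ∈ s, c k • sVec hM k) = ∑ k ∈ s, sortedEig hM k * ‖c k‖ ^ 2 := by
  rw [qf]
  have : Matrix.toEuclideanLin M (∑ k ∈ s, c k • sVec hM k)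
      = ∑ k ∈ s, ((sortedEig hM k : ℂ) * c k) • sVec hM k := by
    rw [map_sum]
    exact Finset.sum_congr rfl fun k _ => by
      rw [LinearMap.map_smul, toEuclideanLin_sVec, smul_smul, mul_comm]
  rw [this, (sVec_orthonormal hM).inner_sum c _ s]
  rw [Complex.re_sum]
  refine Finset.sum_congr rfl fun k _ => ?_
  have : (starRingEnd ℂ) (c k) * ((sortedEig hM k : ℂ) * c k)
      = (sortedEig hM k : ℂ) * ((starRingEnd ℂ) (c k) * c k) := by ring
  rw [this, Complex.conj_mul']
  simp [← Complex.ofReal_pow]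


lemma qf_le_of_mem (hM : M.IsHermitian) {s : Finset (Fin n)} {r : ℝ}
    (hr : ∀ k ∈ s, sortedEig hM k ≤ r) {x : V n} (hx : x ∈ sp hM s) :
    qf M x ≤ r * ‖x‖ ^ 2 := by
  obtain ⟨c, rfl⟩ := mem_sp hM s hx
  rw [qf_repr, norm_sq_repr, Finset.mul_sum]
  exact Finset.sum_le_sum fun k hk =>
    mul_le_mul_of_nonneg_right (hr k hk) (by positivity)

lemma qf_ge_of_mem (hM : M.IsHermitian) {s : Finset (Fin n)} {r : ℝ}
    (hr : ∀ k ∈ s, r ≤ sortedEig hM k) {x : V n} (hx : x ∈ sp hM s) :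
    r * ‖x‖ ^ 2 ≤ qf M x := by
  obtain ⟨c, rfl⟩ := mem_sp hM s hx
  rw [qf_repr, norm_sq_repr, Finset.mul_sum]
  exact Finset.sum_le_sum fun k hk =>
    mul_le_mul_of_nonneg_right (hr k hk) (by positivity)

lemma exists_ne_zero_mem_inf (W T : Submodule ℂ (V n))
    (h : n < Module.finrank ℂ W + Module.finrank ℂ T) :
    ∃ x, x ∈ W ⊓ T ∧ x ≠ 0 := by
  have hfin : Module.finrank ℂ (V n) = n := finrank_euclideanSpace_fin
  have h1 : Module.finrank ℂ ↥(W ⊔ T) + Module.finrank ℂ ↥(W ⊓ T)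
      = Module.finrank ℂ W + Module.finrank ℂ T :=
    Submodule.finrank_sup_add_finrank_inf_eq W T
  have h2 : Module.finrank ℂ ↥(W ⊔ T) ≤ n := by
    have := Submodule.finrank_le (W ⊔ T)
    omega
  have h3 : 0 < Module.finrank ℂ ↥(W ⊓ T) := by omega
  have hbot : W ⊓ T ≠ ⊥ := by
    intro hbot
    rw [hbot, finrank_bot] at h3
    exact lt_irrefl 0 h3
  exact (Submodule.ne_bot_iff _).mp hbot

/-- Easy direction of Courant–Fischer, upper bound form: if the quadratic form of `M`
is `< lam` on a subspace `W` with `finrank W + i ≥ n`, then `sortedEig hM i < lam`. -/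
lemma sortedEig_lt_of_subspace (hM : M.IsHermitian) (i : Fin n) (lam : ℝ)
    (W : Submodule ℂ (V n)) (hdim : n ≤ Module.finrank ℂ W + (i : ℕ))
    (hW : ∀ x ∈ W, x ≠ 0 → qf M x < lam * ‖x‖ ^ 2) :
    sortedEig hM i < lam := by
  set T := sp hM (Finset.Iic i) with hT
  have hTrank : Module.finrank ℂ T = (i : ℕ) + 1 := by
    rw [hT, finrank_sp, Fin.card_Iic]
  obtain ⟨x, hx, hx0⟩ := exists_ne_zero_mem_inf W T (by omega)
  have hlow : sortedEig hM i * ‖x‖ ^ 2 ≤ qf M x :=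
    qf_ge_of_mem hM (fun k hk => sortedEig_antitone hM (Finset.mem_Iic.mp hk)) hx.2
  have hup : qf M x < lam * ‖x‖ ^ 2 := hW x hx.1 hx0
  have hn : 0 < ‖x‖ ^ 2 := by have := norm_pos_iff.mpr hx0; positivity
  nlinarith
  
/-- Easy direction of Courant–Fischer, lower bound form: if the quadratic form of `M`
is `> lam` on a subspace `W` with `finrank W ≥ i + 1`, then `sortedEig hM i > lam`. -/
lemma lt_sortedEig_of_subspace (hM : M.IsHermitian) (i : Fin n) (lam : ℝ)
    (W : Submodule ℂ (V n)) (hdim : (i : ℕ) + 1 ≤ Module.finrank ℂ W)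
    (hW : ∀ x ∈ W, x ≠ 0 → lam * ‖x‖ ^ 2 < qf M x) :
    lam < sortedEig hM i := by
  set T := sp hM (Finset.Ici i) with hT
  have hTrank : Module.finrank ℂ T = n - (i : ℕ) := by
    rw [hT, finrank_sp, Fin.card_Ici]
  have hin : (i : ℕ) < n := i.2
  obtain ⟨x, hx, hx0⟩ := exists_ne_zero_mem_inf W T (by omega)
  have hup : qf M x ≤ sortedEig hM i * ‖x‖ ^ 2 :=
    qf_le_of_mem hM (fun k hk => sortedEig_antitone hM (Finset.mem_Ici.mp hk)) hx.2
  have hlow : lam * ‖x‖ ^ 2 < qf M x := hW x hx.1 hx0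
  have hn : 0 < ‖x‖ ^ 2 := by have := norm_pos_iff.mpr hx0; positivity
  nlinarith


lemma real_ineq {a b g δ c t : ℝ} (ha : 0 ≤ a) (hb : 0 ≤ b) (hg : 0 < g) (hδ : 0 < δ)
    (hc : 0 < c) (ht : 0 < t) (h1 : t * c < g / 2) (h2 : t * c ^ 2 < δ * g / 4)
    (hab : 0 < a ^ 2 + b ^ 2) :
    t * c * a ^ 2 + 2 * t * c * a * b < g * a ^ 2 + t * δ * b ^ 2 := by
  rcases eq_or_lt_of_le ha with rfl | ha'
  · have hb' : 0 < b := by nlinarith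
    have : 0 < t * δ * b ^ 2 := by positivity
    nlinarith
  · -- 2*t*c*a*b ≤ (t*δ/2)*b^2 + (2*t*c^2/δ)*a^2, via (δ*b - 2*c*a)^2 ≥ 0 scaled by t/δ
    have key : 2 * t * c * a * b ≤ (t * δ / 2) * b ^ 2 + (2 * t * c ^ 2 / δ) * a ^ 2 := by
      have h := sq_nonneg (δ * b - 2 * c * a)
      rw [← sub_nonneg]
      have expand : (t * δ / 2 * b ^ 2 + 2 * t * c ^ 2 / δ * a ^ 2) - 2 * t * c * a * b
          = (t / (2 * δ)) * (δ * b - 2 * c * a) ^ 2 := by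
        field_simp
        ring
      rw [expand]
      positivity
    have h3 : 2 * t * c ^ 2 / δ * a ^ 2 < (g / 2) * a ^ 2 := by
      apply mul_lt_mul_of_pos_right _ (by positivity)
      rw [div_lt_iff₀ hδ] at *
      nlinarith
    have h4 : t * c * a ^ 2 < (g / 2) * a ^ 2 :=
      mul_lt_mul_of_pos_right h1 (by positivity)
    nlinarith [mul_pos ht hδ, sq_nonneg b, mul_nonneg (mul_pos ht hδ).le (sq_nonneg b)]


lemma re_inner_symm (hC : C.IsHermitian) (x y : V n) :
    Complex.re ⟪x, Matrix.toEuclideanLin C y⟫ = Complex.re ⟪y, Matrix.toEuclideanLin C x⟫ := by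
  have hsym := Matrix.isHermitian_iff_isSymmetric.mp hC
  rw [← hsym x y, ← inner_conj_symm]
  rw [← inner_conj_symm (𝕜 := ℂ), Complex.conj_re]

lemma qf_add (hC : C.IsHermitian) (x y : V n) :
    qf C (x + y) = qf C x + qf C y + 2 * Complex.re ⟪x, Matrix.toEuclideanLin C y⟫ := by
  simp only [qf, map_add, inner_add_left, inner_add_right, Complex.add_re]
  have := re_inner_symm hC x y
  linarith

/-- The operator norm of the Euclidean linear map of a matrix. -/
noncomputable def opn (C : Matrix (Fin n) (Fin n) ℂ) : ℝ :=
  ‖LinearMap.toContinuousLinearMap (Matrix.toEuclideanLin C)‖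

lemma opn_nonneg (C : Matrix (Fin n) (Fin n) ℂ) : 0 ≤ opn C := norm_nonneg _

lemma abs_re_inner_le (C : Matrix (Fin n) (Fin n) ℂ) (x y : V n) :
    |Complex.re ⟪x, Matrix.toEuclideanLin C y⟫| ≤ opn C * ‖x‖ * ‖y‖ := by
  have h1 : |Complex.re ⟪x, Matrix.toEuclideanLin C y⟫| ≤ ‖⟪x, Matrix.toEuclideanLin C y⟫‖ :=
    Complex.abs_re_le_norm _
  have h2 : ‖⟪x, Matrix.toEuclideanLin C y⟫‖ ≤ ‖x‖ * ‖Matrix.toEuclideanLin C y‖ :=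
    norm_inner_le_norm x _
  have h3 : ‖Matrix.toEuclideanLin C y‖ ≤ opn C * ‖y‖ :=
    (LinearMap.toContinuousLinearMap (Matrix.toEuclideanLin C)).le_opNorm y
  calc |Complex.re ⟪x, Matrix.toEuclideanLin C y⟫| ≤ ‖x‖ * ‖Matrix.toEuclideanLin C y‖ :=
        h1.trans h2
    _ ≤ ‖x‖ * (opn C * ‖y‖) :=
        mul_le_mul_of_nonneg_left h3 (norm_nonneg x)
    _ = opn C * ‖x‖ * ‖y‖ := by ring

lemma abs_qf_le (C : Matrix (Fin n) (Fin n) ℂ) (x : V n) :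
    |qf C x| ≤ opn C * ‖x‖ ^ 2 := by
  have := abs_re_inner_le C x x
  rw [qf]
  nlinarith [norm_nonneg x]

lemma qf_sub_smul (M C : Matrix (Fin n) (Fin n) ℂ) (t : ℝ) (x : V n) :
    qf (M - (t : ℂ) • C) x = qf M x - t * qf C x := by
  simp only [qf, map_sub, _root_.map_smul, LinearMap.sub_apply, LinearMap.smul_apply,
    inner_sub_right, inner_smul_right, Complex.sub_re, Complex.mul_re,
    Complex.ofReal_re, Complex.ofReal_im]
  ring

lemma qf_add_smul (M C : Matrix (Fin n) (Fin n) ℂ) (t : ℝ) (x : V n) :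
    qf (M + (t : ℂ) • C) x = qf M x + t * qf C x := by
  simp only [qf, map_add, _root_.map_smul, LinearMap.add_apply, LinearMap.smul_apply,
    inner_add_right, inner_smul_right, Complex.add_re, Complex.mul_re,
    Complex.ofReal_re, Complex.ofReal_im]
  ring


lemma gap_exists (d : Fin n → ℝ) (lam : ℝ) (s : Finset (Fin n))
    (hs : ∀ k ∈ s, d k < lam) :
    ∃ g : ℝ, 0 < g ∧ ∀ k ∈ s, d k ≤ lam - g := by
  by_cases h : s.Nonempty
  · refine ⟨lam - (s.image d).max' (h.image d), ?_, fun k hk => ?_⟩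
    · rw [sub_pos]
      apply (Finset.max'_lt_iff _ (h.image d)).mpr
      intro y hy
      obtain ⟨k, hk, rfl⟩ := Finset.mem_image.mp hy
      exact hs k hk
    · have := Finset.le_max' (s.image d) (d k) (Finset.mem_image_of_mem d hk)
      linarith
  · exact ⟨1, one_pos, fun k hk => absurd ⟨k, hk⟩ h⟩

lemma claimA {M₀ C : Matrix (Fin n) (Fin n) ℂ}
    (hM₀ : M₀.IsHermitian) (hC : C.IsHermitian) (i : Fin n) (δ : ℝ) (hδpos : 0 < δ)
    (hδ : ∀ x ∈ sp hM₀ (Finset.univ.filter fun k => sortedEig hM₀ k = sortedEig hM₀ i),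
      δ * ‖x‖ ^ 2 ≤ qf C x) :
    ∃ ε > 0, ∀ t : ℝ, 0 < t → t < ε → ∀ h' : (M₀ - (t : ℂ) • C).IsHermitian,
      sortedEig h' i < sortedEig hM₀ i := by
  set d := sortedEig hM₀ with hd
  set lam := sortedEig hM₀ i with hlam
  set s0 : Finset (Fin n) := Finset.univ.filter fun k => d k = lam with hs0
  set slt : Finset (Fin n) := Finset.univ.filter fun k => d k < lam with hslt
  set sle : Finset (Fin n) := Finset.univ.filter fun k => d k ≤ lam with hsle
  obtain ⟨g, hg, hgap⟩ := gap_exists d lam slt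
    (fun k hk => (Finset.mem_filter.mp hk).2)
  set c := opn C with hcdef
  have hvi_mem : sVec hM₀ i ∈ sp hM₀ s0 :=
    Submodule.subset_span ⟨⟨i, by simp [hs0]; rfl⟩, rfl⟩
  have hvi_norm : ‖sVec hM₀ i‖ = 1 := (sVec_orthonormal hM₀).1 i
  have hδc : δ ≤ c := by
    have h1 := hδ _ hvi_mem
    have h2 := abs_qf_le C (sVec hM₀ i)
    rw [hvi_norm] at h1 h2
    have h2' := (abs_le.mp h2).2
    nlinarith
  have hc : 0 < c := lt_of_lt_of_le hδpos hδc
  refine ⟨min (g / (2 * c)) (δ * g / (4 * c ^ 2)), by positivity, fun t ht htε h' => ?_⟩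
  have h1 : t * c < g / 2 := by
    have h := lt_of_lt_of_le htε (min_le_left _ _)
    rw [lt_div_iff₀ (by positivity)] at h
    linarith
  have h2 : t * c ^ 2 < δ * g / 4 := by
    have h := lt_of_lt_of_le htε (min_le_right _ _)
    rw [lt_div_iff₀ (by positivity)] at h
    linarith
  apply sortedEig_lt_of_subspace h' i lam (sp hM₀ sle) ?_ ?_
  · rw [finrank_sp]
    have hsub : Finset.Ici i ⊆ sle := fun k hk => by
      simp only [hsle, Finset.mem_filter, Finset.mem_univ, true_and]
      exact sortedEig_antitone hM₀ (Finset.mem_Ici.mp hk)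
    have hcard := Finset.card_le_card hsub
    rw [Fin.card_Ici] at hcard
    have hin := i.2
    omega
  · intro x hx hx0
    obtain ⟨cf, hcf⟩ := mem_sp hM₀ sle hx
    have hdisj : Disjoint slt s0 := by
      rw [Finset.disjoint_left]
      intro k hk1 hk2
      rw [hslt, Finset.mem_filter] at hk1
      rw [hs0, Finset.mem_filter] at hk2
      exact absurd hk2.2 (ne_of_lt hk1.2)
    have hunion : sle = slt ∪ s0 := by
      ext k
      simp only [hsle, hslt, hs0, Finset.mem_filter, Finset.mem_univ, true_and,
        Finset.mem_union, le_iff_lt_or_eq]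
    set xu := ∑ k ∈ slt, cf k • sVec hM₀ k with hxu
    set xv := ∑ k ∈ s0, cf k • sVec hM₀ k with hxv
    have hx_eq : x = xu + xv := by rw [hcf, hunion, Finset.sum_union hdisj]
    have ha : (0:ℝ) ≤ ‖xu‖ := norm_nonneg _
    have hb : (0:ℝ) ≤ ‖xv‖ := norm_nonneg _
    have hau : ‖xu‖ ^ 2 = ∑ k ∈ slt, ‖cf k‖ ^ 2 := norm_sq_repr hM₀ slt cf
    have hbv : ‖xv‖ ^ 2 = ∑ k ∈ s0, ‖cf k‖ ^ 2 := norm_sq_repr hM₀ s0 cf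
    have hnx : ‖x‖ ^ 2 = ‖xu‖ ^ 2 + ‖xv‖ ^ 2 := by
      rw [hcf, hunion, norm_sq_repr, Finset.sum_union hdisj, hau, hbv]
    have hqM : qf M₀ x ≤ (lam - g) * ‖xu‖ ^ 2 + lam * ‖xv‖ ^ 2 := by
      rw [hcf, hunion, qf_repr, Finset.sum_union hdisj, hau, hbv, Finset.mul_sum,
        Finset.mul_sum]
      apply add_le_add
      · exact Finset.sum_le_sum fun k hk =>
          mul_le_mul_of_nonneg_right (hgap k hk) (by positivity)
      · apply le_of_eq
        exact Finset.sum_congr rfl fun k hk =>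
          congrArg (· * ‖cf k‖ ^ 2) ((Finset.mem_filter.mp hk).2)
    have hqCxv : δ * ‖xv‖ ^ 2 ≤ qf C xv := hδ xv (sum_mem_sp hM₀ s0 cf)
    have hqCxu : -(c * ‖xu‖ ^ 2) ≤ qf C xu := by
      have := (abs_le.mp (abs_qf_le C xu)).1
      linarith
    have hcross : -(c * ‖xu‖ * ‖xv‖) ≤
        Complex.re ⟪xu, Matrix.toEuclideanLin C xv⟫ := by
      have := (abs_le.mp (abs_re_inner_le C xu xv)).1
      linarith
    have hqC : δ * ‖xv‖ ^ 2 - c * ‖xu‖ ^ 2 - 2 * (c * ‖xu‖ * ‖xv‖) ≤ qf C x := by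
      rw [hx_eq, qf_add hC]
      linarith
    have hx2pos : 0 < ‖xu‖ ^ 2 + ‖xv‖ ^ 2 := by
      rw [← hnx]
      have := norm_pos_iff.mpr hx0
      positivity
    have hri := real_ineq ha hb hg hδpos hc ht h1 h2 hx2pos
    rw [qf_sub_smul, hnx]
    have htqC : t * (δ * ‖xv‖ ^ 2 - c * ‖xu‖ ^ 2 - 2 * (c * ‖xu‖ * ‖xv‖)) ≤ t * qf C x :=
      mul_le_mul_of_nonneg_left hqC ht.le
    nlinarith


lemma gap_exists' (d : Fin n → ℝ) (lam : ℝ) (s : Finset (Fin n))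
    (hs : ∀ k ∈ s, lam < d k) :
    ∃ g : ℝ, 0 < g ∧ ∀ k ∈ s, lam + g ≤ d k := by
  obtain ⟨g, hg, hgap⟩ := gap_exists (fun k => -d k) (-lam) s (fun k hk => by
    have := hs k hk; simpa using this)
  exact ⟨g, hg, fun k hk => by have := hgap k hk; simp at this; linarith⟩

lemma claimB {M₀ C : Matrix (Fin n) (Fin n) ℂ}
    (hM₀ : M₀.IsHermitian) (hC : C.IsHermitian) (i : Fin n) (δ : ℝ) (hδpos : 0 < δ)
    (hδ : ∀ x ∈ sp hM₀ (Finset.univ.filter fun k => sortedEig hM₀ k = sortedEig hM₀ i),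
      δ * ‖x‖ ^ 2 ≤ qf C x) :
    ∃ ε > 0, ∀ t : ℝ, 0 < t → t < ε → ∀ h' : (M₀ + (t : ℂ) • C).IsHermitian,
      sortedEig hM₀ i < sortedEig h' i := by
  set d := sortedEig hM₀ with hd
  set lam := sortedEig hM₀ i with hlam
  set s0 : Finset (Fin n) := Finset.univ.filter fun k => d k = lam with hs0
  set sgt : Finset (Fin n) := Finset.univ.filter fun k => lam < d k with hsgt
  set sge : Finset (Fin n) := Finset.univ.filter fun k => lam ≤ d k with hsge
  obtain ⟨g, hg, hgap⟩ := gap_exists' d lam sgt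
    (fun k hk => (Finset.mem_filter.mp hk).2)
  set c := opn C with hcdef
  have hvi_mem : sVec hM₀ i ∈ sp hM₀ s0 :=
    Submodule.subset_span ⟨⟨i, by simp [hs0]; rfl⟩, rfl⟩
  have hvi_norm : ‖sVec hM₀ i‖ = 1 := (sVec_orthonormal hM₀).1 i
  have hδc : δ ≤ c := by
    have h1 := hδ _ hvi_mem
    have h2 := abs_qf_le C (sVec hM₀ i)
    rw [hvi_norm] at h1 h2
    have h2' := (abs_le.mp h2).2
    nlinarith
  have hc : 0 < c := lt_of_lt_of_le hδpos hδc
  refine ⟨min (g / (2 * c)) (δ * g / (4 * c ^ 2)), by positivity, fun t ht htε h' => ?_⟩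
  have h1 : t * c < g / 2 := by
    have h := lt_of_lt_of_le htε (min_le_left _ _)
    rw [lt_div_iff₀ (by positivity)] at h
    linarith
  have h2 : t * c ^ 2 < δ * g / 4 := by
    have h := lt_of_lt_of_le htε (min_le_right _ _)
    rw [lt_div_iff₀ (by positivity)] at h
    linarith
  apply lt_sortedEig_of_subspace h' i lam (sp hM₀ sge) ?_ ?_
  · rw [finrank_sp]
    have hsub : Finset.Iic i ⊆ sge := fun k hk => by
      simp only [hsge, Finset.mem_filter, Finset.mem_univ, true_and]
      exact sortedEig_antitone hM₀ (Finset.mem_Iic.mp hk)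
    have hcard := Finset.card_le_card hsub
    rw [Fin.card_Iic] at hcard
    omega
  · intro x hx hx0
    obtain ⟨cf, hcf⟩ := mem_sp hM₀ sge hx
    have hdisj : Disjoint sgt s0 := by
      rw [Finset.disjoint_left]
      intro k hk1 hk2
      rw [hsgt, Finset.mem_filter] at hk1
      rw [hs0, Finset.mem_filter] at hk2
      exact absurd hk2.2 (ne_of_gt hk1.2)
    have hunion : sge = sgt ∪ s0 := by
      ext k
      simp only [hsge, hsgt, hs0, Finset.mem_filter, Finset.mem_univ, true_and,
        Finset.mem_union, le_iff_lt_or_eq]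
      constructor
      · rintro (h | h)
        · exact Or.inl h
        · exact Or.inr h.symm
      · rintro (h | h)
        · exact Or.inl h
        · exact Or.inr h.symm
    set xu := ∑ k ∈ sgt, cf k • sVec hM₀ k with hxu
    set xv := ∑ k ∈ s0, cf k • sVec hM₀ k with hxv
    have hx_eq : x = xu + xv := by rw [hcf, hunion, Finset.sum_union hdisj]
    have ha : (0:ℝ) ≤ ‖xu‖ := norm_nonneg _
    have hb : (0:ℝ) ≤ ‖xv‖ := norm_nonneg _
    have hau : ‖xu‖ ^ 2 = ∑ k ∈ sgt, ‖cf k‖ ^ 2 := norm_sq_repr hM₀ sgt cf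
    have hbv : ‖xv‖ ^ 2 = ∑ k ∈ s0, ‖cf k‖ ^ 2 := norm_sq_repr hM₀ s0 cf
    have hnx : ‖x‖ ^ 2 = ‖xu‖ ^ 2 + ‖xv‖ ^ 2 := by
      rw [hcf, hunion, norm_sq_repr, Finset.sum_union hdisj, hau, hbv]
    have hqM : (lam + g) * ‖xu‖ ^ 2 + lam * ‖xv‖ ^ 2 ≤ qf M₀ x := by
      rw [hcf, hunion, qf_repr, Finset.sum_union hdisj, hau, hbv, Finset.mul_sum,
        Finset.mul_sum]
      apply add_le_add
      · exact Finset.sum_le_sum fun k hk =>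
          mul_le_mul_of_nonneg_right (hgap k hk) (by positivity)
      · apply le_of_eq
        exact Finset.sum_congr rfl fun k hk =>
          (congrArg (· * ‖cf k‖ ^ 2) ((Finset.mem_filter.mp hk).2)).symm
    have hqCxv : δ * ‖xv‖ ^ 2 ≤ qf C xv := hδ xv (sum_mem_sp hM₀ s0 cf)
    have hqCxu : -(c * ‖xu‖ ^ 2) ≤ qf C xu := by
      have := (abs_le.mp (abs_qf_le C xu)).1
      linarith
    have hcross : -(c * ‖xu‖ * ‖xv‖) ≤
        Complex.re ⟪xu, Matrix.toEuclideanLin C xv⟫ := by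
      have := (abs_le.mp (abs_re_inner_le C xu xv)).1
      linarith
    have hqC : δ * ‖xv‖ ^ 2 - c * ‖xu‖ ^ 2 - 2 * (c * ‖xu‖ * ‖xv‖) ≤ qf C x := by
      rw [hx_eq, qf_add hC]
      linarith
    have hx2pos : 0 < ‖xu‖ ^ 2 + ‖xv‖ ^ 2 := by
      rw [← hnx]
      have := norm_pos_iff.mpr hx0
      positivity
    have hri := real_ineq ha hb hg hδpos hc ht h1 h2 hx2pos
    rw [qf_add_smul, hnx]
    have htqC : t * (δ * ‖xv‖ ^ 2 - c * ‖xu‖ ^ 2 - 2 * (c * ‖xu‖ * ‖xv‖)) ≤ t * qf C x :=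
      mul_le_mul_of_nonneg_left hqC ht.le
    nlinarith


lemma qf_smul (C : Matrix (Fin n) (Fin n) ℂ) (z : ℂ) (x : V n) :
    qf C (z • x) = ‖z‖ ^ 2 * qf C x := by
  simp only [qf, _root_.map_smul, inner_smul_left, inner_smul_right, ← mul_assoc,
    Complex.mul_conj, Complex.mul_re, Complex.ofReal_re, Complex.ofReal_im,
    Complex.normSq_eq_norm_sq]
  ring

lemma qf_neg (C : Matrix (Fin n) (Fin n) ℂ) (x : V n) : qf (-C) x = - qf C x := by
  simp [qf, inner_neg_right]

lemma qf_continuous (C : Matrix (Fin n) (Fin n) ℂ) : Continuous (qf C) := by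
  have : qf C = fun x => Complex.re
      ⟪x, LinearMap.toContinuousLinearMap (Matrix.toEuclideanLin C) x⟫ := rfl
  rw [this]
  exact Complex.continuous_re.comp (continuous_id.inner
    (LinearMap.toContinuousLinearMap (Matrix.toEuclideanLin C)).continuous)

lemma sortedEig_congr {M₁ M₂ : Matrix (Fin n) (Fin n) ℂ} (h : M₁ = M₂)
    (h₁ : M₁.IsHermitian) (h₂ : M₂.IsHermitian) : sortedEig h₁ = sortedEig h₂ := by
  subst h; rfl

/-- Vectors in the span of the `lam`-eigenvectors are `lam`-eigenvectors. -/
lemma toEuclideanLin_eq_of_mem_sp (hM : M.IsHermitian) {lam : ℝ} {x : V n}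
    (hx : x ∈ sp hM (Finset.univ.filter fun k => sortedEig hM k = lam)) :
    Matrix.toEuclideanLin M x = (lam : ℂ) • x := by
  obtain ⟨cf, rfl⟩ := mem_sp hM _ hx
  rw [map_sum, Finset.smul_sum]
  refine Finset.sum_congr rfl fun k hk => ?_
  rw [LinearMap.map_smul, toEuclideanLin_sVec, (Finset.mem_filter.mp hk).2,
    smul_smul, smul_smul, mul_comm]

/-- For a Hermitian `C`, the quadratic form `xᴴCx` is a real number. -/
lemma dot_self_real (hC : C.IsHermitian) (x : V n) :
    star (x : Fin n → ℂ) ⬝ᵥ (C *ᵥ x) = (qf C x : ℂ) := by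
  have hz : (star (x : Fin n → ℂ) ⬝ᵥ (C *ᵥ x)) = ⟪x, Matrix.toEuclideanLin C x⟫ :=
    dotProduct_comm _ _
  have hsym := Matrix.isHermitian_iff_isSymmetric.mp hC
  have hconj : (starRingEnd ℂ) ⟪x, Matrix.toEuclideanLin C x⟫ =
      ⟪x, Matrix.toEuclideanLin C x⟫ := by
    rw [inner_conj_symm]
    exact hsym x x
  have him : (⟪x, Matrix.toEuclideanLin C x⟫ : ℂ).im = 0 :=
    Complex.conj_eq_iff_im.mp hconj
  rw [hz]
  refine Complex.ext ?_ ?_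
  · rw [Complex.ofReal_re]; rfl
  · rw [Complex.ofReal_im]; exact him

/-- Trichotomy: on the unit sphere of a subspace, a continuous real quadratic form either
vanishes somewhere, is everywhere positive, or is everywhere negative. -/
lemma qf_trichotomy (C : Matrix (Fin n) (Fin n) ℂ) (E : Submodule ℂ (V n)) :
    (∃ x ∈ E, ‖x‖ = 1 ∧ qf C x = 0) ∨ (∀ x ∈ E, ‖x‖ = 1 → 0 < qf C x) ∨
      (∀ x ∈ E, ‖x‖ = 1 → qf C x < 0) := by
  by_contra hcon
  push_neg at hcon
  obtain ⟨h0, ⟨x, hxE, hx1, hx⟩, ⟨y, hyE, hy1, hy⟩⟩ := hcon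
  -- qf C x ≤ 0 ≤ qf C y, neither is zero
  have hxneg : qf C x < 0 := lt_of_le_of_ne hx (h0 x hxE hx1)
  have hypos : 0 < qf C y := lt_of_le_of_ne hy (Ne.symm (h0 y hyE hy1))
  set p : ℝ → V n := fun s => (1 - (s : ℂ)) • x + (s : ℂ) • y with hp
  have hpE : ∀ s : ℝ, p s ∈ E := fun s =>
    Submodule.add_mem E (Submodule.smul_mem E _ hxE) (Submodule.smul_mem E _ hyE)
  have hpne : ∀ s ∈ Set.Icc (0:ℝ) 1, p s ≠ 0 := by
    rintro s ⟨hs0, hs1⟩ hzero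
    rcases eq_or_lt_of_le hs0 with rfl | hs0'
    · simp only [hp, Complex.ofReal_zero, sub_zero, one_smul, zero_smul, add_zero] at hzero
      rw [hzero] at hx1; simp at hx1
    rcases eq_or_lt_of_le hs1 with rfl | hs1'
    · simp only [hp, Complex.ofReal_one, sub_self, zero_smul, one_smul, zero_add] at hzero
      rw [hzero] at hy1; simp at hy1
    -- 0 < s < 1 and (1-s) • x = -(s • y)
    have hx_eq : x = (-(s : ℂ) / (1 - (s : ℂ))) • y := by
      have h1s : (1 - (s : ℂ)) ≠ 0 := by
        intro h
        have := congrArg Complex.re h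
        simp at this
        linarith
      have : (1 - (s : ℂ)) • x = -((s : ℂ) • y) := by
        rw [eq_neg_iff_add_eq_zero]
        exact hzero
      calc x = (1 - (s:ℂ))⁻¹ • ((1 - (s:ℂ)) • x) := by rw [smul_smul, inv_mul_cancel₀ h1s, one_smul]
        _ = (1 - (s:ℂ))⁻¹ • (-((s:ℂ) • y)) := by rw [this]
        _ = (-(s : ℂ) / (1 - (s : ℂ))) • y := by
            rw [smul_neg, smul_smul, ← neg_smul]
            congr 1
            field_simp
    have hcoef : (-(s : ℂ) / (1 - (s : ℂ))) ≠ 0 := by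
      apply div_ne_zero
      · simp only [ne_eq, neg_eq_zero, Complex.ofReal_eq_zero]
        linarith
      · intro h
        have := congrArg Complex.re h
        simp at this
        linarith
    have := qf_smul C (-(s : ℂ) / (1 - (s : ℂ))) y
    rw [← hx_eq] at this
    have hnormpos : (0:ℝ) < ‖(-(s : ℂ) / (1 - (s : ℂ)))‖ ^ 2 := by
      have := norm_pos_iff.mpr hcoef
      positivity
    nlinarith
  have hcont : Continuous fun s : ℝ => qf C (p s) := by
    apply (qf_continuous C).comp
    exact ((continuous_const.sub Complex.continuous_ofReal).smul continuous_const).add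
      (Complex.continuous_ofReal.smul continuous_const)
  have hg0 : qf C (p 0) = qf C x := by simp [hp]
  have hg1 : qf C (p 1) = qf C y := by simp [hp]
  have hivt := intermediate_value_Icc (by norm_num : (0:ℝ) ≤ 1) hcont.continuousOn
  have h0mem : (0:ℝ) ∈ Set.Icc (qf C (p 0)) (qf C (p 1)) := by
    rw [hg0, hg1]
    exact ⟨hxneg.le, hypos.le⟩
  obtain ⟨s₀, hs₀, hgs₀⟩ := hivt h0mem
  set z := p s₀ with hzdef
  have hzne : z ≠ 0 := hpne s₀ hs₀
  have hznorm : (0:ℝ) < ‖z‖ := norm_pos_iff.mpr hzne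
  set w := ((‖z‖⁻¹ : ℝ) : ℂ) • z with hw
  have hwE : w ∈ E := Submodule.smul_mem E _ (hpE s₀)
  have hw1 : ‖w‖ = 1 := by
    rw [hw, norm_smul]
    simp [abs_of_pos (inv_pos.mpr hznorm), inv_mul_cancel₀ (ne_of_gt hznorm)]
  have hwq : qf C w = 0 := by
    have hgz : qf C z = 0 := hgs₀
    rw [hw, qf_smul, hgz, mul_zero]
  exact h0 w hwE hw1 hwq


/-- If a continuous quadratic form is positive on the unit sphere of a (nonempty) subspace,
it has a positive lower bound `δ` there, and `δ * ‖x‖² ≤ qf C x` on the whole subspace. -/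
lemma delta_extraction (C : Matrix (Fin n) (Fin n) ℂ) (E : Submodule ℂ (V n))
    (x₀ : V n) (hx₀E : x₀ ∈ E) (hx₀1 : ‖x₀‖ = 1)
    (hpos : ∀ x ∈ E, ‖x‖ = 1 → 0 < qf C x) :
    ∃ δ : ℝ, 0 < δ ∧ ∀ x ∈ E, δ * ‖x‖ ^ 2 ≤ qf C x := by
  set K : Set (V n) := (E : Set (V n)) ∩ Metric.sphere 0 1 with hK
  have hKco : IsCompact K := by
    apply (isCompact_sphere (0 : V n) 1).of_isClosed_subset
    · exact (Submodule.closed_of_finiteDimensional E).inter Metric.isClosed_sphere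
    · exact Set.inter_subset_right
  have hKne : K.Nonempty := ⟨x₀, hx₀E, by simpa using hx₀1⟩
  obtain ⟨xm, hxm, hmin'⟩ := hKco.exists_isMinOn hKne (qf_continuous C).continuousOn
  have hmin : ∀ y ∈ K, qf C xm ≤ qf C y := fun y hy => hmin' hy
  have hxmE : xm ∈ E := hxm.1
  have hxm1 : ‖xm‖ = 1 := by simpa using hxm.2
  refine ⟨qf C xm, hpos xm hxmE hxm1, fun x hxE => ?_⟩
  rcases eq_or_ne x 0 with rfl | hx0
  · simp [qf]
  · have hnx : (0:ℝ) < ‖x‖ := norm_pos_iff.mpr hx0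
    set w := ((‖x‖⁻¹ : ℝ) : ℂ) • x with hw
    have hwE : w ∈ E := Submodule.smul_mem E _ hxE
    have hw1 : ‖w‖ = 1 := by
      rw [hw, norm_smul]
      simp [abs_of_pos (inv_pos.mpr hnx), inv_mul_cancel₀ (ne_of_gt hnx)]
    have hle := hmin w ⟨hwE, by simpa using hw1⟩
    rw [hw, qf_smul] at hle
    have hn : ‖((‖x‖⁻¹ : ℝ) : ℂ)‖ ^ 2 = (‖x‖ ^ 2)⁻¹ := by
      rw [Complex.norm_real]
      rw [Real.norm_eq_abs, abs_of_pos (inv_pos.mpr hnx)]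
      rw [← inv_pow]
    rw [hn] at hle
    have h2 : (0:ℝ) < ‖x‖ ^ 2 := by positivity
    calc qf C xm * ‖x‖ ^ 2 ≤ ((‖x‖ ^ 2)⁻¹ * qf C x) * ‖x‖ ^ 2 :=
          mul_le_mul_of_nonneg_right hle h2.le
      _ = qf C x := by field_simp


lemma isLocalMin_absurd {f : ℝ → ℝ} {a ε : ℝ} (hε : 0 < ε) (hmin : IsLocalMin f a)
    (σ : ℝ) (hσ : |σ| = 1) (h : ∀ t : ℝ, 0 < t → t < ε → f (a + σ * t) < f a) : False := by
  obtain ⟨r, hr, hloc⟩ := Metric.eventually_nhds_iff.mp hmin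
  set t := min ε r / 2 with htdef
  have ht : 0 < t := by positivity
  have h1 : t < ε := by
    have := min_le_left ε r
    rw [htdef]
    linarith
  have h2 : dist (a + σ * t) a < r := by
    rw [Real.dist_eq, add_sub_cancel_left, abs_mul, hσ, one_mul, abs_of_pos ht]
    have := min_le_right ε r
    linarith
  exact absurd (hloc h2) (not_le.mpr (h t ht h1))

lemma isLocalMax_absurd {f : ℝ → ℝ} {a ε : ℝ} (hε : 0 < ε) (hmax : IsLocalMax f a)
    (σ : ℝ) (hσ : |σ| = 1) (h : ∀ t : ℝ, 0 < t → t < ε → f a < f (a + σ * t)) : False :=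
  isLocalMin_absurd hε hmax.neg σ hσ fun t ht htε => neg_lt_neg (h t ht htε)


end TwoDEig

open TwoDEig in
/-- If `μ⋆` is a local minimum or local maximum point of the
`i`-th sorted eigencurve `μ ↦ λᵢ(μ)` of `A - μC` and `lam⋆ = λᵢ(μ⋆)`, then
`(μ⋆, lam⋆)` is a 2D-eigenvalue of `(A, C)`: there is a unit vector `x` with
`(A - μ⋆C)x = lam⋆ x` and `xᴴCx = 0`. -/
theorem local_extremum_of_eigencurve_is_2DEigenvalue
    {n : ℕ} (A C : Matrix (Fin n) (Fin n) ℂ)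
    (hA : A.IsHermitian) (hC : C.IsHermitian) (i : Fin n) (μstar : ℝ)
    (hext :
      IsLocalMin (fun μ : ℝ => sortedEig (pencil_isHermitian hA hC μ) i) μstar ∨
      IsLocalMax (fun μ : ℝ => sortedEig (pencil_isHermitian hA hC μ) i) μstar) :
    ∃ x : Fin n → ℂ,
      star x ⬝ᵥ x = 1 ∧
      (A - (μstar : ℂ) • C) *ᵥ x =
        ((sortedEig (pencil_isHermitian hA hC μstar) i : ℝ) : ℂ) • x ∧
      star x ⬝ᵥ (C *ᵥ x) = 0 := by
  classical
  set f : ℝ → ℝ := fun μ => sortedEig (pencil_isHermitian hA hC μ) i with hf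
  have hM₀ : (pencil A C μstar).IsHermitian := pencil_isHermitian hA hC μstar
  set E : Submodule ℂ (V n) := sp hM₀
    (Finset.univ.filter fun k => sortedEig hM₀ k = sortedEig hM₀ i) with hE
  have hvi_mem : sVec hM₀ i ∈ E := Submodule.subset_span ⟨⟨i, by simp⟩, rfl⟩
  have hvi_norm : ‖sVec hM₀ i‖ = 1 := (sVec_orthonormal hM₀).1 i
  rcases qf_trichotomy C E with ⟨x, hxE, hx1, hq0⟩ | hpos | hneg
  · -- found the 2D-eigenvector
    refine ⟨x, ?_, ?_, ?_⟩
    · have h1 : (inner ℂ x x : ℂ) = ((‖x‖ : ℂ)) ^ 2 := inner_self_eq_norm_sq_to_K x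
      rw [hx1] at h1
      rw [dotProduct_comm]
      exact h1.trans (by simp)
    · have hE := toEuclideanLin_eq_of_mem_sp hM₀ hxE
      exact congrArg (WithLp.equiv 2 (Fin n → ℂ)) hE
    · rw [dot_self_real hC x, hq0, Complex.ofReal_zero]
  · -- qf C positive on the sphere of E : eigencurve strictly decreasing, contradiction
    exfalso
    obtain ⟨δ, hδpos, hδ⟩ := delta_extraction C E (sVec hM₀ i) hvi_mem hvi_norm hpos
    rcases hext with hmin | hmax
    · obtain ⟨ε, hε, hcA⟩ := claimA hM₀ hC i δ hδpos hδ
      refine isLocalMin_absurd hε hmin 1 (by norm_num) fun t ht htε => ?_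
      have heq : pencil A C (μstar + 1 * t) = pencil A C μstar - (t : ℂ) • C := by
        simp only [pencil, one_mul, Complex.ofReal_add, add_smul, sub_sub]
      have h' : (pencil A C μstar - (t : ℂ) • C).IsHermitian :=
        heq ▸ pencil_isHermitian hA hC (μstar + 1 * t)
      have hfeq : f (μstar + 1 * t) = sortedEig h' i :=
        congrFun (sortedEig_congr heq _ h') i
      show f (μstar + 1 * t) < f μstar
      rw [hfeq]
      exact hcA t ht htε h'
    · obtain ⟨ε, hε, hcB⟩ := claimB hM₀ hC i δ hδpos hδ
      refine isLocalMax_absurd hε hmax (-1) (by norm_num) fun t ht htε => ?_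
      have heq : pencil A C (μstar + (-1) * t) = pencil A C μstar + (t : ℂ) • C := by
        simp only [pencil, neg_one_mul, Complex.ofReal_add, add_smul, Complex.ofReal_neg,
          neg_smul, sub_add_eq_sub_sub_swap, sub_neg_eq_add]
        abel
      have h' : (pencil A C μstar + (t : ℂ) • C).IsHermitian :=
        heq ▸ pencil_isHermitian hA hC (μstar + (-1) * t)
      have hfeq : f (μstar + (-1) * t) = sortedEig h' i :=
        congrFun (sortedEig_congr heq _ h') i
      show f μstar < f (μstar + (-1) * t)
      rw [hfeq]
      exact hcB t ht htε h'
  · -- qf C negative on the sphere of E : use -C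
    exfalso
    have hpos' : ∀ x ∈ E, ‖x‖ = 1 → 0 < qf (-C) x := fun x hx h1 => by
      rw [qf_neg]
      linarith [hneg x hx h1]
    obtain ⟨δ, hδpos, hδ⟩ := delta_extraction (-C) E (sVec hM₀ i) hvi_mem hvi_norm hpos'
    rcases hext with hmin | hmax
    · obtain ⟨ε, hε, hcA⟩ := claimA hM₀ hC.neg i δ hδpos hδ
      refine isLocalMin_absurd hε hmin (-1) (by norm_num) fun t ht htε => ?_
      have heq : pencil A C (μstar + (-1) * t) = pencil A C μstar - (t : ℂ) • (-C) := by
        simp only [pencil, neg_one_mul, Complex.ofReal_add, add_smul, Complex.ofReal_neg,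
          neg_smul, smul_neg, sub_neg_eq_add, sub_add_eq_sub_sub_swap]
        abel
      have h' : (pencil A C μstar - (t : ℂ) • (-C)).IsHermitian :=
        heq ▸ pencil_isHermitian hA hC (μstar + (-1) * t)
      have hfeq : f (μstar + (-1) * t) = sortedEig h' i :=
        congrFun (sortedEig_congr heq _ h') i
      show f (μstar + (-1) * t) < f μstar
      rw [hfeq]
      exact hcA t ht htε h'
    · obtain ⟨ε, hε, hcB⟩ := claimB hM₀ hC.neg i δ hδpos hδ
      refine isLocalMax_absurd hε hmax 1 (by norm_num) fun t ht htε => ?_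
      have heq : pencil A C (μstar + 1 * t) = pencil A C μstar + (t : ℂ) • (-C) := by
        simp only [pencil, one_mul, Complex.ofReal_add, add_smul, smul_neg]
        abel
      have h' : (pencil A C μstar + (t : ℂ) • (-C)).IsHermitian :=
        heq ▸ pencil_isHermitian hA hC (μstar + 1 * t)
      have hfeq : f (μstar + 1 * t) = sortedEig h' i :=
        congrFun (sortedEig_congr heq _ h') i
      show f μstar < f (μstar + 1 * t)
      rw [hfeq]
      exact hcB t ht htε h'
end

section
/- Let A, C ∈ ℂ^{n×n} be Hermitian with C indefinite. Then the pair (A, C) has at least one 2D-eigentriple: there exist μ, λ ∈ ℝ and x ∈ ℂ^n with (A − μC)x = λx, x^H C x = 0, and x^H x = 1. -/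
open Matrix

/-!
Let `f μ` be the largest eigenvalue of `A - μC`, i.e. the maximum of `xᴴ(A - μC)x` over unit `x`.
It is continuous, and since `C` has a unit vector with `xᴴCx > 0` and one with `xᴴCx < 0`, it
tends to `+∞` as `μ → ±∞`; let `μ₀` be a minimiser. If `x` is a unit top eigenvector of
`A - (μ₀ + t)C` with `t > 0`, then `f μ₀ ≥ xᴴ(A - μ₀C)x = f (μ₀ + t) + t xᴴCx ≥ f μ₀ + t xᴴCx`,
so `xᴴCx ≤ 0`, and as `t → 0` a limit point of such `x` is a top eigenvector of `A - μ₀C` with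
`xᴴCx ≤ 0`. Symmetrically (`t < 0`) there is one, `y`, with `yᴴCy ≥ 0`. Along the segment from
`x` to `y`, which stays in the top eigenspace and avoids `0` when `xᴴCx < 0 < yᴴCy`, the form
`zᴴCz` vanishes somewhere; normalising that `z` gives the eigentriple.
-/

open Filter Topology
open scoped ComplexOrder

namespace Matrix

variable {ι : Type*} [Fintype ι]

def quadForm (M : Matrix ι ι ℂ) (x : ι → ℂ) : ℝ :=
  (star x ⬝ᵥ (M *ᵥ x)).re

variable (ι) in
def dotUnitSphere : Set (ι → ℂ) :=
  {x | star x ⬝ᵥ x = 1}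

-- For Hermitian `M` this is the largest eigenvalue: see `IsHermitian.mulVec_eq_of_maxRayleigh_le`.
noncomputable def maxRayleigh (M : Matrix ι ι ℂ) : ℝ :=
  sSup (quadForm M '' dotUnitSphere ι)

theorem IsHermitian.coe_quadForm {M : Matrix ι ι ℂ} (hM : M.IsHermitian) (x : ι → ℂ) :
    (quadForm M x : ℂ) = star x ⬝ᵥ (M *ᵥ x) :=
  Complex.ext rfl (hM.im_star_dotProduct_mulVec_self x).symm

theorem star_dotProduct_self_eq_sum_norm_sq (x : ι → ℂ) :
    star x ⬝ᵥ x = ((∑ i, ‖x i‖ ^ 2 : ℝ) : ℂ) := by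
  simp [dotProduct, Complex.conj_mul']

theorem quadForm_smul (M : Matrix ι ι ℂ) (c : ℝ) (x : ι → ℂ) :
    quadForm M ((c : ℂ) • x) = c ^ 2 * quadForm M x := by
  simp only [quadForm, mulVec_smul, star_smul, smul_dotProduct, dotProduct_smul, smul_eq_mul,
    Complex.star_def, Complex.conj_ofReal, ← mul_assoc, ← Complex.ofReal_mul, Complex.re_ofReal_mul]
  ring

theorem continuous_quadForm (M : Matrix ι ι ℂ) : Continuous (quadForm M) :=
  Complex.continuous_re.comp <|
    continuous_star.dotProduct (continuous_const.matrix_mulVec continuous_id)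

theorem mem_dotUnitSphere_iff {x : ι → ℂ} : x ∈ dotUnitSphere ι ↔ ∑ i, ‖x i‖ ^ 2 = 1 := by
  rw [dotUnitSphere, Set.mem_ofPred_eq, star_dotProduct_self_eq_sum_norm_sq]
  exact_mod_cast Iff.rfl

theorem ne_zero_of_mem_dotUnitSphere {x : ι → ℂ} (hx : x ∈ dotUnitSphere ι) : x ≠ 0 := by
  rintro rfl
  simp [dotUnitSphere] at hx

theorem sum_norm_sq_pos {x : ι → ℂ} (hx : x ≠ 0) : 0 < ∑ i, ‖x i‖ ^ 2 := by
  have := dotProduct_star_self_pos_iff.mpr hx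
  rwa [star_dotProduct_self_eq_sum_norm_sq, Complex.zero_lt_real] at this

theorem inv_sqrt_smul_mem_dotUnitSphere {x : ι → ℂ} (hx : x ≠ 0) :
    (((√(∑ i, ‖x i‖ ^ 2))⁻¹ : ℝ) : ℂ) • x ∈ dotUnitSphere ι := by
  have hr := sum_norm_sq_pos hx
  change star _ ⬝ᵥ _ = _
  rw [star_smul, smul_dotProduct, dotProduct_smul, star_dotProduct_self_eq_sum_norm_sq,
    Complex.star_def, Complex.conj_ofReal, smul_eq_mul, smul_eq_mul]
  norm_cast
  rw [← mul_assoc, ← sq, inv_pow, Real.sq_sqrt hr.le, inv_mul_cancel₀ hr.ne']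

theorem isCompact_dotUnitSphere : IsCompact (dotUnitSphere ι) := by
  refine (isCompact_closedBall (0 : ι → ℂ) 1).of_isClosed_subset
    (isClosed_eq (continuous_star.dotProduct continuous_id) continuous_const) fun x hx => ?_
  refine mem_closedBall_zero_iff.2 <| (pi_norm_le_iff_of_nonneg zero_le_one).2 fun i => ?_
  have : ‖x i‖ ^ 2 ≤ 1 := mem_dotUnitSphere_iff.1 hx ▸
    Finset.single_le_sum (f := fun j => ‖x j‖ ^ 2) (fun j _ => by positivity) (Finset.mem_univ i)
  exact (pow_le_one_iff_of_nonneg (norm_nonneg _) two_ne_zero).1 this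

theorem quadForm_le_maxRayleigh (M : Matrix ι ι ℂ) {x : ι → ℂ} (hx : x ∈ dotUnitSphere ι) :
    quadForm M x ≤ maxRayleigh M :=
  le_csSup ((isCompact_dotUnitSphere.image (continuous_quadForm M)).bddAbove) ⟨x, hx, rfl⟩

theorem exists_quadForm_eq_maxRayleigh [Nonempty ι] (M : Matrix ι ι ℂ) :
    ∃ x ∈ dotUnitSphere ι, quadForm M x = maxRayleigh M := by
  classical
  obtain ⟨i⟩ := ‹Nonempty ι›
  have hi : Pi.single i 1 ∈ dotUnitSphere ι := by simp [dotUnitSphere]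
  exact (isCompact_dotUnitSphere.image (continuous_quadForm M)).sSup_mem ⟨_, _, hi, rfl⟩

theorem quadForm_le_maxRayleigh_mul (M : Matrix ι ι ℂ) (x : ι → ℂ) :
    quadForm M x ≤ maxRayleigh M * ∑ i, ‖x i‖ ^ 2 := by
  rcases eq_or_ne x 0 with rfl | hx
  · simp [quadForm]
  have hr := sum_norm_sq_pos hx
  have := quadForm_le_maxRayleigh M (inv_sqrt_smul_mem_dotUnitSphere hx)
  rwa [quadForm_smul, inv_pow, Real.sq_sqrt hr.le, inv_mul_le_iff₀ hr, mul_comm] at this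

theorem IsHermitian.mulVec_eq_of_maxRayleigh_le {M : Matrix ι ι ℂ} (hM : M.IsHermitian)
    {x : ι → ℂ} (hx : x ∈ dotUnitSphere ι) (h : maxRayleigh M ≤ quadForm M x) :
    M *ᵥ x = (maxRayleigh M : ℂ) • x := by
  classical
  have hform (v : ι → ℂ) : star v ⬝ᵥ (((maxRayleigh M : ℂ) • 1 - M) *ᵥ v) =
      ((maxRayleigh M * ∑ i, ‖v i‖ ^ 2 - quadForm M v : ℝ) : ℂ) := by
    rw [sub_mulVec, smul_mulVec, one_mulVec, dotProduct_sub, dotProduct_smul,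
      star_dotProduct_self_eq_sum_norm_sq, ← hM.coe_quadForm, smul_eq_mul]
    push_cast; ring
  have hpsd : ((maxRayleigh M : ℂ) • 1 - M).PosSemidef := by
    refine posSemidef_iff_dotProduct_mulVec.2 ⟨?_, fun v => ?_⟩
    · exact (isHermitian_one.smul (Complex.conj_ofReal _)).sub hM
    · rw [hform, Complex.zero_le_real, sub_nonneg]
      exact quadForm_le_maxRayleigh_mul M v
  have hzero := (hpsd.dotProduct_mulVec_zero_iff x).1 <| by
    rw [hform, mem_dotUnitSphere_iff.1 hx, mul_one, le_antisymm (quadForm_le_maxRayleigh M hx) h,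
      sub_self, Complex.ofReal_zero]
  rwa [sub_mulVec, smul_mulVec, one_mulVec, sub_eq_zero, eq_comm] at hzero

theorem IsHermitian.exists_mem_dotUnitSphere_quadForm_eq_eigenvalues [DecidableEq ι]
    {M : Matrix ι ι ℂ} (hM : M.IsHermitian) (i : ι) :
    ∃ x ∈ dotUnitSphere ι, quadForm M x = hM.eigenvalues i := by
  refine ⟨hM.eigenvectorBasis i, ?_, (hM.eigenvalues_eq i).symm⟩
  have h := (orthonormal_iff_ite.mp hM.eigenvectorBasis.orthonormal) i i
  rw [if_pos rfl, EuclideanSpace.inner_eq_star_dotProduct, dotProduct_comm] at h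
  exact h

theorem exists_ne_zero_quadForm_eq_zero (M : Matrix ι ι ℂ) {V : Submodule ℂ (ι → ℂ)}
    {x y : ι → ℂ} (hxV : x ∈ V) (hyV : y ∈ V) (hx : x ≠ 0) (hy : y ≠ 0)
    (hMx : quadForm M x ≤ 0) (hMy : 0 ≤ quadForm M y) :
    ∃ z ∈ V, z ≠ 0 ∧ quadForm M z = 0 := by
  rcases hMx.eq_or_lt with hMx | hMx
  · exact ⟨x, hxV, hx, hMx⟩
  rcases hMy.eq_or_lt with hMy | hMy
  · exact ⟨y, hyV, hy, hMy.symm⟩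
  set w : ℝ → ι → ℂ := fun t => ((1 - t : ℝ) : ℂ) • x + (t : ℂ) • y
  have hw : Continuous w := by fun_prop
  obtain ⟨t, -, ht⟩ := intermediate_value_Icc zero_le_one
    ((continuous_quadForm M).comp hw).continuousOn
    (show (0 : ℝ) ∈ Set.Icc (quadForm M (w 0)) (quadForm M (w 1)) by
      simpa [w] using ⟨hMx.le, hMy.le⟩)
  refine ⟨w t, V.add_mem (V.smul_mem _ hxV) (V.smul_mem _ hyV), fun hwt => ?_, ht⟩
  have hq : quadForm M (((1 - t : ℝ) : ℂ) • x) = quadForm M (((-t : ℝ) : ℂ) • y) := by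
    rw [eq_neg_of_add_eq_zero_left hwt, Complex.ofReal_neg, neg_smul]
  rw [quadForm_smul, quadForm_smul, neg_sq] at hq
  have hty : t ^ 2 * quadForm M y = 0 := by
    nlinarith [mul_nonpos_of_nonneg_of_nonpos (sq_nonneg (1 - t)) hMx.le,
      mul_nonneg (sq_nonneg t) hMy.le]
  have ht0 : t = 0 := by simpa [hMy.ne'] using hty
  rw [ht0, sub_zero, one_pow, one_mul, zero_pow two_ne_zero, zero_mul] at hq
  exact hMx.ne hq

theorem exists_mem_dotUnitSphere_quadForm_eq_zero (M : Matrix ι ι ℂ) {V : Submodule ℂ (ι → ℂ)}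
    {x y : ι → ℂ} (hxV : x ∈ V) (hyV : y ∈ V) (hx : x ∈ dotUnitSphere ι)
    (hy : y ∈ dotUnitSphere ι) (hMx : quadForm M x ≤ 0) (hMy : 0 ≤ quadForm M y) :
    ∃ z ∈ V, z ∈ dotUnitSphere ι ∧ quadForm M z = 0 := by
  obtain ⟨z, hzV, hz, hMz⟩ := exists_ne_zero_quadForm_eq_zero M hxV hyV
    (ne_zero_of_mem_dotUnitSphere hx) (ne_zero_of_mem_dotUnitSphere hy) hMx hMy
  exact ⟨_, V.smul_mem _ hzV, inv_sqrt_smul_mem_dotUnitSphere hz,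
    by rw [quadForm_smul, hMz, mul_zero]⟩

end Matrix

section Pencil

variable {n : ℕ}

theorem quadForm_pencil (A C : Matrix (Fin n) (Fin n) ℂ) (μ : ℝ) (x : Fin n → ℂ) :
    quadForm (pencil A C μ) x = quadForm A x - μ * quadForm C x := by
  simp only [pencil, quadForm, sub_mulVec, smul_mulVec, dotProduct_sub, dotProduct_smul,
    smul_eq_mul, Complex.sub_re, Complex.re_ofReal_mul]

theorem continuous_maxRayleigh_pencil (A C : Matrix (Fin n) (Fin n) ℂ) :
    Continuous fun μ : ℝ => maxRayleigh (pencil A C μ) := by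
  refine isCompact_dotUnitSphere.continuous_sSup (f := fun μ => quadForm (pencil A C μ)) ?_
  have : (↿fun μ => quadForm (pencil A C μ)) =
      fun p : ℝ × (Fin n → ℂ) => quadForm A p.2 - p.1 * quadForm C p.2 :=
    funext fun p => quadForm_pencil A C p.1 p.2
  rw [this]
  exact ((continuous_quadForm A).comp continuous_snd).sub
    (continuous_fst.mul ((continuous_quadForm C).comp continuous_snd))

theorem sub_mul_quadForm_le_maxRayleigh_pencil {A C : Matrix (Fin n) (Fin n) ℂ} {x : Fin n → ℂ}
    (hx : x ∈ dotUnitSphere (Fin n)) (μ : ℝ) :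
    quadForm A x - μ * quadForm C x ≤ maxRayleigh (pencil A C μ) :=
  quadForm_pencil A C μ x ▸ quadForm_le_maxRayleigh _ hx

theorem tendsto_maxRayleigh_pencil_cocompact {A C : Matrix (Fin n) (Fin n) ℂ} {v w : Fin n → ℂ}
    (hv : v ∈ dotUnitSphere (Fin n)) (hw : w ∈ dotUnitSphere (Fin n)) (hCv : 0 < quadForm C v)
    (hCw : quadForm C w < 0) :
    Tendsto (fun μ => maxRayleigh (pencil A C μ)) (cocompact ℝ) atTop := by
  rw [cocompact_eq_atBot_atTop, tendsto_sup]
  constructor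
  · refine tendsto_atTop_mono (sub_mul_quadForm_le_maxRayleigh_pencil hv) ?_
    simpa [sub_eq_add_neg] using tendsto_atTop_add_const_left _ (quadForm A v)
      (tendsto_neg_atBot_atTop.comp (tendsto_id.atBot_mul_const hCv))
  · refine tendsto_atTop_mono (sub_mul_quadForm_le_maxRayleigh_pencil hw) ?_
    simpa [sub_eq_add_neg] using tendsto_atTop_add_const_left _ (quadForm A w)
      (tendsto_id.atTop_mul_const (neg_pos.2 hCw))

theorem exists_pencil_mulVec_eq_maxRayleigh_and_mul_quadForm_nonpos [Nonempty (Fin n)]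
    {A C : Matrix (Fin n) (Fin n) ℂ} (hA : A.IsHermitian) (hC : C.IsHermitian) {μ₀ : ℝ}
    (hμ₀ : ∀ μ, maxRayleigh (pencil A C μ₀) ≤ maxRayleigh (pencil A C μ)) (σ : ℝ) :
    ∃ x ∈ dotUnitSphere (Fin n), pencil A C μ₀ *ᵥ x = (maxRayleigh (pencil A C μ₀) : ℂ) • x ∧
      σ * quadForm C x ≤ 0 := by
  set ε : ℕ → ℝ := fun k => 1 / ((k : ℝ) + 1)
  have hε (k : ℕ) : 0 < ε k := by positivity
  choose xs hxs hxsf using fun k => exists_quadForm_eq_maxRayleigh (pencil A C (μ₀ + ε k * σ))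
  have hsplit (k : ℕ) : quadForm (pencil A C μ₀) (xs k) =
      maxRayleigh (pencil A C (μ₀ + ε k * σ)) + ε k * (σ * quadForm C (xs k)) := by
    rw [← hxsf, quadForm_pencil, quadForm_pencil]; ring
  have hsign (k : ℕ) : σ * quadForm C (xs k) ≤ 0 := by
    refine nonpos_of_mul_nonpos_left ?_ (hε k)
    linarith [hsplit k, quadForm_le_maxRayleigh (pencil A C μ₀) (hxs k), hμ₀ (μ₀ + ε k * σ)]
  obtain ⟨x, hx, φ, hφ, hlim⟩ := isCompact_dotUnitSphere.tendsto_subseq hxs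
  have hCx : Tendsto (fun k => σ * quadForm C (xs (φ k))) atTop (𝓝 (σ * quadForm C x)) :=
    (((continuous_quadForm C).tendsto x).comp hlim).const_mul σ
  have hlow : Tendsto
      (fun k => maxRayleigh (pencil A C μ₀) + ε (φ k) * (σ * quadForm C (xs (φ k)))) atTop
      (𝓝 (maxRayleigh (pencil A C μ₀))) := by
    have := tendsto_const_nhds (x := maxRayleigh (pencil A C μ₀)) |>.add
      ((tendsto_one_div_add_atTop_nhds_zero_nat.comp hφ.tendsto_atTop).mul hCx)
    rwa [zero_mul, add_zero] at this
  have hmax : maxRayleigh (pencil A C μ₀) ≤ quadForm (pencil A C μ₀) x :=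
    le_of_tendsto_of_tendsto' hlow (((continuous_quadForm _).tendsto x).comp hlim) fun k => by
      change _ ≤ quadForm (pencil A C μ₀) (xs (φ k))
      linarith [hsplit (φ k), hμ₀ (μ₀ + ε (φ k) * σ)]
  exact ⟨x, hx, (pencil_isHermitian hA hC μ₀).mulVec_eq_of_maxRayleigh_le hx hmax,
    le_of_tendsto' hCx fun k => hsign (φ k)⟩

end Pencil

/-- For Hermitian `A, C` with `C` indefinite, the pair `(A, C)`
has at least one 2D-eigentriple. -/
theorem exists_2DEigentriple
    {n : ℕ} (A C : Matrix (Fin n) (Fin n) ℂ)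
    (hA : A.IsHermitian) (hC : C.IsHermitian) (hCind : IsIndefinite hC) :
    ∃ (μ lam : ℝ) (x : Fin n → ℂ), Is2DEigentriple A C μ lam x := by
  obtain ⟨⟨i, hi⟩, ⟨j, hj⟩⟩ := hCind
  have : Nonempty (Fin n) := ⟨i⟩
  obtain ⟨v, hv, hCv⟩ := hC.exists_mem_dotUnitSphere_quadForm_eq_eigenvalues i
  obtain ⟨w, hw, hCw⟩ := hC.exists_mem_dotUnitSphere_quadForm_eq_eigenvalues j
  obtain ⟨μ, hμ⟩ := (continuous_maxRayleigh_pencil A C).exists_forall_le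
    (tendsto_maxRayleigh_pencil_cocompact hv hw (hCv ▸ hi) (hCw ▸ hj))
  set H := pencil A C μ
  obtain ⟨x, hx, hHx, hCx⟩ :=
    exists_pencil_mulVec_eq_maxRayleigh_and_mul_quadForm_nonpos hA hC hμ 1
  obtain ⟨y, hy, hHy, hCy⟩ :=
    exists_pencil_mulVec_eq_maxRayleigh_and_mul_quadForm_nonpos hA hC hμ (-1)
  obtain ⟨z, hzV, hz, hCz⟩ := exists_mem_dotUnitSphere_quadForm_eq_zero C
    (V := Module.End.eigenspace (toLin' H) (maxRayleigh H))
    (by simpa using hHx) (by simpa using hHy) hx hy (by linarith) (by linarith)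
  rw [Module.End.mem_eigenspace_iff, toLin'_apply] at hzV
  refine ⟨μ, maxRayleigh H, z, hzV, ?_, hz⟩
  rw [← hC.coe_quadForm, hCz, Complex.ofReal_zero]
end

section
/- Let A, C ∈ ℂ^{n×n} be Hermitian with C indefinite. If (μ_*, λ_*) is a 2D-eigenvalue of (A, C), then for all μ, μ' ∈ ℝ one has λ_n(μ) ≤ λ_* ≤ λ_1(μ'); equivalently, sup_{μ∈ℝ} λ_n(μ) ≤ λ_* ≤ inf_{μ∈ℝ} λ_1(μ). -/
open Matrix

lemma sortedEig_bounds {n : ℕ} (hn : 0 < n) {M : Matrix (Fin n) (Fin n) ℂ}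
    (hM : M.IsHermitian) (j : Fin n) :
    (hM.eigenvalues ∘ Tuple.sort hM.eigenvalues) ⟨0, hn⟩ ≤ hM.eigenvalues j ∧
    hM.eigenvalues j ≤ (hM.eigenvalues ∘ Tuple.sort hM.eigenvalues) ⟨n-1, Nat.sub_lt hn one_pos⟩ := by
  have hmono := Tuple.monotone_sort hM.eigenvalues
  have hj : hM.eigenvalues j
      = (hM.eigenvalues ∘ Tuple.sort hM.eigenvalues) ((Tuple.sort hM.eigenvalues)⁻¹ j) := by
    simp
  constructor
  · rw [hj]; exact hmono (by exact Fin.mk_le_mk.mpr (Nat.zero_le _))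
  · rw [hj]
    exact hmono (Fin.mk_le_mk.mpr (Nat.le_sub_one_of_lt ((Tuple.sort hM.eigenvalues)⁻¹ j).isLt) |>.trans_eq rfl |> fun h => h)


lemma rayleigh_bounds {n : ℕ} {M : Matrix (Fin n) (Fin n) ℂ} (hM : M.IsHermitian)
    {x : Fin n → ℂ} (hx : star x ⬝ᵥ x = 1) {r : ℝ}
    (hr : star x ⬝ᵥ (M *ᵥ x) = (r : ℂ)) {a b : ℝ}
    (ha : ∀ i, hM.eigenvalues i ≤ a) (hb : ∀ i, b ≤ hM.eigenvalues i) :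
    b ≤ r ∧ r ≤ a := by
  set U : Matrix (Fin n) (Fin n) ℂ := (hM.eigenvectorUnitary : Matrix (Fin n) (Fin n) ℂ) with hU
  set y : Fin n → ℂ := star U *ᵥ x with hy
  have hstar : star y = star x ᵥ* U := by
    rw [hy, star_mulVec]
    show star x ᵥ* Uᴴᴴ = _
    rw [conjTranspose_conjTranspose]
  have hUU : U * star U = 1 := (Matrix.mem_unitaryGroup_iff).mp hM.eigenvectorUnitary.2
  -- sum of weights is 1
  have hw1 : ∑ i, Complex.normSq (y i) = 1 := by
    have : star y ⬝ᵥ y = 1 := by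
      rw [hstar, ← dotProduct_mulVec, hy, mulVec_mulVec, hUU, one_mulVec, hx]
    have h2 : star y ⬝ᵥ y = ((∑ i, Complex.normSq (y i) : ℝ) : ℂ) := by
      simp [dotProduct, Complex.normSq_eq_conj_mul_self]
    rw [h2] at this
    exact_mod_cast this
  -- r as weighted sum
  have hrsum : r = ∑ i, hM.eigenvalues i * Complex.normSq (y i) := by
    have hspec := hM.spectral_theorem
    have : star x ⬝ᵥ (M *ᵥ x)
        = ((∑ i, hM.eigenvalues i * Complex.normSq (y i) : ℝ) : ℂ) := by
      conv_lhs => rw [hspec]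
      rw [Unitary.conjStarAlgAut_apply, ← mulVec_mulVec, ← mulVec_mulVec, dotProduct_mulVec, ← hstar, ← hy,
        dotProduct_mulVec]
      simp [vecMul_diagonal, dotProduct, Complex.normSq_eq_conj_mul_self]
      ring_nf
      congr 1
      ext i
      ring
    rw [hr] at this
    exact_mod_cast this
  constructor
  · calc b = ∑ i, b * Complex.normSq (y i) := by rw [← Finset.mul_sum, hw1, mul_one]
      _ ≤ _ := by
        rw [hrsum]
        exact Finset.sum_le_sum fun i _ =>
          mul_le_mul_of_nonneg_right (hb i) (Complex.normSq_nonneg _)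
  · calc r = ∑ i, hM.eigenvalues i * Complex.normSq (y i) := hrsum
      _ ≤ ∑ i, a * Complex.normSq (y i) :=
        Finset.sum_le_sum fun i _ =>
          mul_le_mul_of_nonneg_right (ha i) (Complex.normSq_nonneg _)
      _ = a := by rw [← Finset.mul_sum, hw1, mul_one]

/-- For Hermitian `A, C` with `C` indefinite, every
2D-eigenvalue `(μ⋆, λ⋆)` of `(A, C)` satisfies `λₙ(μ) ≤ λ⋆ ≤ λ₁(μ')` for all
`μ, μ' ∈ ℝ`. -/
theorem two_dim_eigenvalue_between_extremal_eigencurves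
    {n : ℕ} (hn : 0 < n) (A C : Matrix (Fin n) (Fin n) ℂ)
    (hA : A.IsHermitian) (hC : C.IsHermitian) (hCind : IsIndefinite hC)
    (μstar lamstar : ℝ) (h2d : Is2DEigenvalue A C μstar lamstar) :
    ∀ μ μ' : ℝ,
      sortedEig (pencil_isHermitian hA hC μ) ⟨n - 1, Nat.sub_lt hn one_pos⟩ ≤ lamstar ∧
      lamstar ≤ sortedEig (pencil_isHermitian hA hC μ') ⟨0, hn⟩ := by

  obtain ⟨x, h1, h2, h3⟩ := h2d
  -- the Rayleigh quotient of the pencil at x is lamstar, for every μ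
  have key : ∀ μ : ℝ, star x ⬝ᵥ (pencil A C μ *ᵥ x) = (lamstar : ℂ) := by
    intro μ
    have hdecomp : pencil A C μ = (A - (μstar : ℂ) • C) + ((μstar - μ : ℝ) : ℂ) • C := by
      unfold pencil
      push_cast
      rw [sub_smul]
      abel
    rw [hdecomp, add_mulVec, smul_mulVec, dotProduct_add, dotProduct_smul, h2, h1,
      dotProduct_smul, h3]
    simp
  intro μ μ'
  have hrev1 : (⟨n - 1, Nat.sub_lt hn one_pos⟩ : Fin n).rev = ⟨0, hn⟩ := by
    ext
    simp [Fin.rev]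
    omega
  have hrev0 : (⟨0, hn⟩ : Fin n).rev = ⟨n - 1, Nat.sub_lt hn one_pos⟩ := by
    ext
    simp [Fin.rev]
  constructor
  · have hr := key μ
    have hb : ∀ i, sortedEig (pencil_isHermitian hA hC μ) ⟨n - 1, Nat.sub_lt hn one_pos⟩ ≤
        (pencil_isHermitian hA hC μ).eigenvalues i := by
      intro i
      have := (sortedEig_bounds hn (pencil_isHermitian hA hC μ) i).1
      unfold sortedEig
      rwa [hrev1]
    have ha : ∀ i, (pencil_isHermitian hA hC μ).eigenvalues i ≤
        sortedEig (pencil_isHermitian hA hC μ) ⟨0, hn⟩ := by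
      intro i
      have := (sortedEig_bounds hn (pencil_isHermitian hA hC μ) i).2
      unfold sortedEig
      rwa [hrev0]
    exact (rayleigh_bounds (pencil_isHermitian hA hC μ) h3 hr ha hb).1
  · have hr := key μ'
    have ha : ∀ i, (pencil_isHermitian hA hC μ').eigenvalues i ≤
        sortedEig (pencil_isHermitian hA hC μ') ⟨0, hn⟩ := by
      intro i
      have := (sortedEig_bounds hn (pencil_isHermitian hA hC μ') i).2
      unfold sortedEig
      rwa [hrev0]
    have hb : ∀ i, sortedEig (pencil_isHermitian hA hC μ') ⟨n - 1, Nat.sub_lt hn one_pos⟩ ≤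
        (pencil_isHermitian hA hC μ').eigenvalues i := by
      intro i
      have := (sortedEig_bounds hn (pencil_isHermitian hA hC μ') i).1
      unfold sortedEig
      rwa [hrev1]
    exact (rayleigh_bounds (pencil_isHermitian hA hC μ') h3 hr ha hb).2
end

section
/- Let A, C ∈ ℂ^{n×n} be Hermitian with C nonsingular and indefinite. Let λ_C^{(+)} be the minimum positive eigenvalue of C and λ_C^{(−)} the maximum negative eigenvalue of C. If (μ_*, λ_*, x_*) is a 2D-eigentriple of (A, C), then |μ_*| ≤ ‖A‖ / √(−λ_C^{(−)} λ_C^{(+)}), where ‖A‖ denotes the spectral norm (operator 2-norm) of A. -/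
open Matrix

open ComplexOrder in

private theorem myPSD {n : ℕ} {C : Matrix (Fin n) (Fin n) ℂ} (hC : C.IsHermitian) (s p : ℝ)
    (hq : ∀ i, 0 ≤ (hC.eigenvalues i)^2 - s * hC.eigenvalues i + p) :
    (C * C - (s:ℂ) • C + (p:ℂ) • 1).PosSemidef := by
  set U : Matrix (Fin n) (Fin n) ℂ := (hC.eigenvectorUnitary : Matrix (Fin n) (Fin n) ℂ) with hUdef
  have hU1 : U * star U = 1 := (Matrix.mem_unitaryGroup_iff).mp (hC.eigenvectorUnitary).2
  have hU2 : star U * U = 1 := (Matrix.mem_unitaryGroup_iff').mp (hC.eigenvectorUnitary).2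
  set D : Matrix (Fin n) (Fin n) ℂ := Matrix.diagonal (RCLike.ofReal ∘ hC.eigenvalues) with hDdef
  have hspec : C = U * D * star U := hC.spectral_theorem
  have h2 : U * D * star U * (U * D * star U) = U * (D * D) * star U := by
    simp only [Matrix.mul_assoc]
    rw [← Matrix.mul_assoc (star U) U (D * star U), hU2, Matrix.one_mul]
  have h3 : U * ((s:ℂ) • D) * star U = (s:ℂ) • (U * D * star U) := by
    rw [mul_smul_comm, smul_mul_assoc]
  have h4 : U * ((p:ℂ) • 1) * star U = (p:ℂ) • (1 : Matrix (Fin n) (Fin n) ℂ) := by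
    rw [mul_smul_comm, smul_mul_assoc, Matrix.mul_one, hU1]
  have key : C * C - (s:ℂ) • C + (p:ℂ) • 1 = U * (D * D - (s:ℂ) • D + (p:ℂ) • 1) * star U := by
    rw [hspec, Matrix.mul_add, Matrix.mul_sub, Matrix.add_mul, Matrix.sub_mul, ← h2, h3, h4]
  have hdiag : D * D - (s:ℂ) • D + (p:ℂ) • 1
      = Matrix.diagonal (fun i => (((hC.eigenvalues i)^2 - s * hC.eigenvalues i + p : ℝ) : ℂ)) := by
    ext i j
    by_cases h : i = j <;>
      simp [hDdef, h, Matrix.diagonal_apply, Matrix.one_apply, Function.comp] <;> push_cast <;> ring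
  rw [key, hdiag]
  have hpsd : (Matrix.diagonal (fun i => (((hC.eigenvalues i)^2 - s * hC.eigenvalues i + p : ℝ) : ℂ))).PosSemidef := by
    apply Matrix.PosSemidef.diagonal
    intro i
    simp only [Pi.zero_apply]
    rw [Complex.zero_le_real]
    exact hq i
  have := hpsd.mul_mul_conjTranspose_same U
  rwa [← Matrix.star_eq_conjTranspose] at this

private theorem inner_equiv_symm' {n : ℕ} (x y : Fin n → ℂ) :
    inner ℂ ((WithLp.equiv 2 _).symm x : EuclideanSpace ℂ (Fin n)) ((WithLp.equiv 2 _).symm y)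
      = star x ⬝ᵥ y := by
  rw [dotProduct_comm]; rfl

open ComplexOrder in
private theorem mu_bound_of_2DEigentriple'
    {n : ℕ} (A C : Matrix (Fin n) (Fin n) ℂ)
    (hA : A.IsHermitian) (hC : C.IsHermitian)
    (hCns : C.det ≠ 0)
    (lamP lamM : ℝ)
    (hlamP : 0 < lamP ∧ ∀ i, 0 < hC.eigenvalues i → lamP ≤ hC.eigenvalues i)
    (hlamM : lamM < 0 ∧ ∀ i, hC.eigenvalues i < 0 → hC.eigenvalues i ≤ lamM)
    (μstar lamstar : ℝ) (xstar : Fin n → ℂ)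
    (heq : (A - (μstar : ℂ) • C) *ᵥ xstar = (lamstar : ℂ) • xstar)
    (horth : star xstar ⬝ᵥ (C *ᵥ xstar) = 0) (hnorm : star xstar ⬝ᵥ xstar = 1) :
    |μstar| ≤ ‖Matrix.toEuclideanCLM (𝕜 := ℂ) A‖ / Real.sqrt (-(lamM * lamP)) := by
  obtain ⟨hP, hPmin⟩ := hlamP
  obtain ⟨hM, hMmax⟩ := hlamM
  set y : Fin n → ℂ := C *ᵥ xstar with hy
  -- all eigenvalues are nonzero
  have hnz : ∀ i, hC.eigenvalues i ≠ 0 := by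
    intro i h
    apply hCns
    rw [hC.det_eq_prod_eigenvalues]
    exact Finset.prod_eq_zero (Finset.mem_univ i) (by rw [h]; simp)
  have hq : ∀ i, 0 ≤ (hC.eigenvalues i)^2 - (lamP + lamM) * hC.eigenvalues i + lamP * lamM := by
    intro i
    rcases (hnz i).lt_or_gt with hneg | hpos
    · have h1 := hMmax i hneg
      have : 0 ≤ (lamP - hC.eigenvalues i) * (lamM - hC.eigenvalues i) :=
        mul_nonneg (by linarith) (by linarith)
      nlinarith
    · have h1 := hPmin i hpos
      have : 0 ≤ (hC.eigenvalues i - lamP) * (hC.eigenvalues i - lamM) :=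
        mul_nonneg (by linarith) (by linarith)
      nlinarith
  have hPSD := (myPSD hC (lamP + lamM) (lamP * lamM) hq).dotProduct_mulVec_nonneg xstar
  -- star y ⬝ᵥ y
  have hystar : star y = star xstar ᵥ* C := by
    rw [hy, Matrix.star_mulVec, hC]
  have hCC : star xstar ⬝ᵥ ((C * C) *ᵥ xstar) = star y ⬝ᵥ y := by
    rw [← Matrix.mulVec_mulVec, Matrix.dotProduct_mulVec, ← hystar]
  have hyx : star y ⬝ᵥ xstar = 0 := by
    rw [hystar, ← Matrix.dotProduct_mulVec, horth]
  set Y : EuclideanSpace ℂ (Fin n) := (WithLp.equiv 2 _).symm y with hY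
  set X : EuclideanSpace ℂ (Fin n) := (WithLp.equiv 2 _).symm xstar with hX
  have hyy : star y ⬝ᵥ y = ((‖Y‖ ^ 2 : ℝ) : ℂ) := by
    rw [← inner_equiv_symm', inner_self_eq_norm_sq_to_K]
    push_cast
    rfl
  have hXnorm : ‖X‖ = 1 := by
    have h1 : (inner ℂ X X : ℂ) = 1 := by
      rw [hX, inner_equiv_symm', hnorm]
    rw [inner_self_eq_norm_sq_to_K] at h1
    rw [← RCLike.ofReal_pow, ← RCLike.ofReal_one (K := ℂ)] at h1
    have h2 : ‖X‖ ^ 2 = 1 := RCLike.ofReal_inj.mp h1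
    rw [← Real.sqrt_sq (norm_nonneg X), h2, Real.sqrt_one]
  -- lower bound on ‖Y‖²
  have hYlb : -(lamM * lamP) ≤ ‖Y‖ ^ 2 := by
    have e1 : star xstar ⬝ᵥ ((C * C - ((lamP + lamM : ℝ) : ℂ) • C + ((lamP * lamM : ℝ) : ℂ) • 1) *ᵥ xstar)
        = ((‖Y‖ ^ 2 + lamP * lamM : ℝ) : ℂ) := by
      rw [Matrix.add_mulVec, Matrix.sub_mulVec, Matrix.smul_mulVec, Matrix.smul_mulVec,
        Matrix.one_mulVec, dotProduct_add, dotProduct_sub, dotProduct_smul, dotProduct_smul,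
        horth, hnorm, hCC, hyy]
      simp only [smul_eq_mul, mul_zero, mul_one]
      push_cast
      ring
    rw [e1] at hPSD
    rw [Complex.zero_le_real] at hPSD
    linarith
  have hc : 0 < -(lamM * lamP) := by nlinarith
  have hYpos : 0 < ‖Y‖ := by
    have := Real.sqrt_pos.mpr hc
    nlinarith [norm_nonneg Y]
  -- the pencil equation dotted with star y
  have e2 : star y ⬝ᵥ (A *ᵥ xstar) = (μstar : ℂ) * ((‖Y‖ ^ 2 : ℝ) : ℂ) := by
    have h := congrArg (fun v => star y ⬝ᵥ v) heq
    simp only [Matrix.sub_mulVec, Matrix.smul_mulVec, dotProduct_sub, dotProduct_smul,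
      smul_eq_mul, hyx, mul_zero] at h
    rw [← hyy]
    rw [sub_eq_zero] at h
    rw [h]
  -- Cauchy–Schwarz + operator norm
  set T := Matrix.toEuclideanCLM (𝕜 := ℂ) A with hT
  have hTX : T X = (WithLp.equiv 2 _).symm (A *ᵥ xstar) := by
    rw [hX]; rfl
  have hinner : (inner ℂ Y (T X) : ℂ) = star y ⬝ᵥ (A *ᵥ xstar) := by
    rw [hTX, hY, inner_equiv_symm']
  have hmain : |μstar| * ‖Y‖ ^ 2 ≤ ‖Y‖ * ‖T‖ := by
    have hcs := norm_inner_le_norm (𝕜 := ℂ) Y (T X)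
    rw [hinner, e2] at hcs
    have hop : ‖T X‖ ≤ ‖T‖ * ‖X‖ := T.le_opNorm X
    rw [hXnorm, mul_one] at hop
    have hlhs : ‖(μstar : ℂ) * ((‖Y‖ ^ 2 : ℝ) : ℂ)‖ = |μstar| * ‖Y‖ ^ 2 := by
      rw [norm_mul, Complex.norm_real, Complex.norm_real, Real.norm_eq_abs, Real.norm_eq_abs,
        abs_of_nonneg (pow_nonneg (norm_nonneg Y) 2)]
    rw [hlhs] at hcs
    calc |μstar| * ‖Y‖ ^ 2 ≤ ‖Y‖ * ‖T X‖ := hcs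
      _ ≤ ‖Y‖ * ‖T‖ := by nlinarith [norm_nonneg Y]
  -- conclude
  have hsq : Real.sqrt (-(lamM * lamP)) ≤ ‖Y‖ := by
    rw [← Real.sqrt_sq (norm_nonneg Y)]
    exact Real.sqrt_le_sqrt hYlb
  have hsqpos : 0 < Real.sqrt (-(lamM * lamP)) := Real.sqrt_pos.mpr hc
  rw [le_div_iff₀ hsqpos]
  nlinarith [abs_nonneg μstar, mul_le_mul_of_nonneg_left hsq (mul_nonneg (abs_nonneg μstar) (norm_nonneg Y))]

/-- Let `C` be Hermitian, nonsingular and indefinite, with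
minimum positive eigenvalue `lamP` and maximum negative eigenvalue `lamM`.
Every 2D-eigentriple `(μ⋆, λ⋆, x⋆)` of `(A, C)` satisfies
`|μ⋆| ≤ ‖A‖ / √(-lamM * lamP)`, where `‖A‖` is the spectral norm of `A`. -/
theorem mu_bound_of_2DEigentriple
    {n : ℕ} (A C : Matrix (Fin n) (Fin n) ℂ)
    (hA : A.IsHermitian) (hC : C.IsHermitian)
    (hCns : C.det ≠ 0) (hCind : IsIndefinite hC)
    (lamP lamM : ℝ)
    (hlamP : (∃ i, hC.eigenvalues i = lamP) ∧ 0 < lamP ∧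
      ∀ i, 0 < hC.eigenvalues i → lamP ≤ hC.eigenvalues i)
    (hlamM : (∃ i, hC.eigenvalues i = lamM) ∧ lamM < 0 ∧
      ∀ i, hC.eigenvalues i < 0 → hC.eigenvalues i ≤ lamM)
    (μstar lamstar : ℝ) (xstar : Fin n → ℂ)
    (h2d : Is2DEigentriple A C μstar lamstar xstar) :
    |μstar| ≤ ‖Matrix.toEuclideanCLM (𝕜 := ℂ) A‖ / Real.sqrt (-(lamM * lamP)) :=
  mu_bound_of_2DEigentriple' A C hA hC hCns lamP lamM ⟨hlamP.2.1, hlamP.2.2⟩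
    ⟨hlamM.2.1, hlamM.2.2⟩ μstar lamstar xstar h2d.1 h2d.2.1 h2d.2.2
end

section
/- Let C ∈ ℂ^{n×n} be Hermitian, nonsingular and indefinite, with minimum positive eigenvalue λ_C^{(+)} and maximum negative eigenvalue λ_C^{(−)}. Then for every x ∈ ℂ^n with x^H x = 1 and x^H C x = 0 one has ‖Cx‖² ≥ −λ_C^{(+)} λ_C^{(−)}, and this bound is attained; that is, min{ ‖Cx‖ : x ∈ ℂ^n, x^H x = 1, x^H C x = 0 } = √(−λ_C^{(+)} λ_C^{(−)}). -/
open Matrix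

/-- Let `C` be Hermitian, nonsingular and indefinite, with
minimum positive eigenvalue `lamP` and maximum negative eigenvalue `lamM`.
For every unit vector `x` with `xᴴCx = 0` one has `‖Cx‖² ≥ -lamP * lamM`
(Euclidean norm), and the bound is attained:
`min { ‖Cx‖ : xᴴx = 1, xᴴCx = 0 } = √(-lamP * lamM)`. -/
theorem min_norm_Cx_on_isotropic_unit_sphere
    {n : ℕ} (C : Matrix (Fin n) (Fin n) ℂ)
    (hC : C.IsHermitian) (hCns : C.det ≠ 0) (hCind : IsIndefinite hC)
    (lamP lamM : ℝ)
    (hlamP : (∃ i, hC.eigenvalues i = lamP) ∧ 0 < lamP ∧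
      ∀ i, 0 < hC.eigenvalues i → lamP ≤ hC.eigenvalues i)
    (hlamM : (∃ i, hC.eigenvalues i = lamM) ∧ lamM < 0 ∧
      ∀ i, hC.eigenvalues i < 0 → hC.eigenvalues i ≤ lamM) :
    (∀ x : Fin n → ℂ, star x ⬝ᵥ x = 1 → star x ⬝ᵥ (C *ᵥ x) = 0 →
      -(lamP * lamM) ≤ ‖(EuclideanSpace.equiv (Fin n) ℂ).symm (C *ᵥ x)‖ ^ 2) ∧
    (∃ x : Fin n → ℂ, star x ⬝ᵥ x = 1 ∧ star x ⬝ᵥ (C *ᵥ x) = 0 ∧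
      ‖(EuclideanSpace.equiv (Fin n) ℂ).symm (C *ᵥ x)‖ =
        Real.sqrt (-(lamP * lamM))) := by
    classical
  open ComplexOrder in
  -- eigenvalues are nonzero
  have hev_ne : ∀ i, hC.eigenvalues i ≠ 0 := by
    intro i hi
    apply hCns
    rw [hC.det_eq_prod_eigenvalues]
    exact Finset.prod_eq_zero (Finset.mem_univ i) (by rw [hi]; norm_num)
  have hfac : ∀ i, 0 ≤ (hC.eigenvalues i - lamP) * (hC.eigenvalues i - lamM) := by
    intro i
    rcases lt_or_gt_of_ne (hev_ne i) with hneg | hpos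
    · have := hlamM.2.2 i hneg
      have := hlamM.2.1
      have := hlamP.2.1
      nlinarith
    · have := hlamP.2.2 i hpos
      have := hlamM.2.1
      apply mul_nonneg <;> linarith
  -- the matrix (C - lamP)(C - lamM) is PSD
  have hpsd : ((C - (lamP:ℂ) • 1) * (C - (lamM:ℂ) • 1)).PosSemidef := by
    have hV1 : (hC.eigenvectorUnitary : Matrix (Fin n) (Fin n) ℂ) *
        (hC.eigenvectorUnitary : Matrix (Fin n) (Fin n) ℂ)ᴴ = 1 :=
      (Matrix.mem_unitaryGroup_iff).mp hC.eigenvectorUnitary.2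
    have hV2 : (hC.eigenvectorUnitary : Matrix (Fin n) (Fin n) ℂ)ᴴ *
        (hC.eigenvectorUnitary : Matrix (Fin n) (Fin n) ℂ) = 1 :=
      (Matrix.mem_unitaryGroup_iff').mp hC.eigenvectorUnitary.2
    set V : Matrix (Fin n) (Fin n) ℂ := (hC.eigenvectorUnitary : Matrix (Fin n) (Fin n) ℂ)
      with hVdef
    have key : ∀ μ : ℝ, C - (μ:ℂ) • 1 =
        V * diagonal (fun i => ((hC.eigenvalues i - μ : ℝ) : ℂ)) * Vᴴ := by
      intro μ
      have hs : C = V * diagonal (RCLike.ofReal ∘ hC.eigenvalues) * Vᴴ := hC.spectral_theorem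
      have h1 : (μ:ℂ) • (1 : Matrix (Fin n) (Fin n) ℂ) = V * ((μ:ℂ) • 1) * Vᴴ := by
        rw [Matrix.mul_smul, Matrix.smul_mul, mul_one, hV1]
      conv_lhs => rw [hs, h1]
      rw [← Matrix.sub_mul, ← Matrix.mul_sub]
      congr 2
      rw [smul_one_eq_diagonal, diagonal_sub]
      congr 1
      funext i
      simp
    rw [key lamP, key lamM]
    have h2 : (V * diagonal (fun i => ((hC.eigenvalues i - lamP : ℝ) : ℂ)) * Vᴴ) *
        (V * diagonal (fun i => ((hC.eigenvalues i - lamM : ℝ) : ℂ)) * Vᴴ) =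
        V * diagonal
          (fun i => (((hC.eigenvalues i - lamP) * (hC.eigenvalues i - lamM) : ℝ) : ℂ)) * Vᴴ := by
      rw [mul_assoc, mul_assoc, ← mul_assoc Vᴴ, ← mul_assoc Vᴴ, hV2, one_mul,
        ← mul_assoc, ← mul_assoc, mul_assoc V, diagonal_mul_diagonal]
      congr 2
      funext i
      push_cast
      ring
    rw [h2]
    refine PosSemidef.mul_mul_conjTranspose_same (PosSemidef.diagonal ?_) V
    intro i
    show (0:ℂ) ≤ (((hC.eigenvalues i - lamP) * (hC.eigenvalues i - lamM) : ℝ) : ℂ)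
    exact_mod_cast hfac i
  constructor
  · -- the lower bound
    intro x hx1 hx0
    have hq := hpsd.dotProduct_mulVec_nonneg x
    have hexp : star x ⬝ᵥ (((C - (lamP:ℂ) • 1) * (C - (lamM:ℂ) • 1)) *ᵥ x)
        = star x ⬝ᵥ (C *ᵥ (C *ᵥ x)) + ((lamP*lamM : ℝ) : ℂ) := by
      rw [← mulVec_mulVec]
      simp only [sub_mulVec, smul_mulVec, one_mulVec, mulVec_sub, mulVec_smul,
        dotProduct_sub, dotProduct_smul, hx0, hx1, smul_eq_mul]
      push_cast
      ring_nf
    rw [hexp] at hq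
    have hy : star (C *ᵥ x) ⬝ᵥ (C *ᵥ x) = star x ⬝ᵥ (C *ᵥ (C *ᵥ x)) := by
      rw [star_mulVec, ← dotProduct_mulVec, hC.eq]
    have hnorm : (‖(EuclideanSpace.equiv (Fin n) ℂ).symm (C *ᵥ x)‖ ^ 2 : ℝ)
        = Complex.re (star (C *ᵥ x) ⬝ᵥ (C *ᵥ x)) := by
      rw [← @inner_self_eq_norm_sq ℂ, EuclideanSpace.inner_eq_star_dotProduct, dotProduct_comm]
      rfl
    rw [hnorm, hy]
    have h2 := (Complex.le_def.mp hq).1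
    simp only [Complex.add_re, Complex.ofReal_re, Complex.zero_re] at h2
    linarith
  · -- attainment
    obtain ⟨iP, hP⟩ := hlamP.1
    obtain ⟨iM, hM⟩ := hlamM.1
    have hPpos := hlamP.2.1
    have hMneg := hlamM.2.1
    have hne : iP ≠ iM := by
      intro h; rw [h, hM] at hP; linarith
    have hd : 0 < lamP - lamM := by linarith
    set a : ℝ := Real.sqrt (-lamM / (lamP - lamM)) with ha
    set b : ℝ := Real.sqrt (lamP / (lamP - lamM)) with hb
    have ha2 : a ^ 2 = -lamM / (lamP - lamM) := by
      rw [ha, Real.sq_sqrt]; apply div_nonneg <;> linarith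
    have hb2 : b ^ 2 = lamP / (lamP - lamM) := by
      rw [hb, Real.sq_sqrt]; apply div_nonneg <;> linarith
    have hab1 : a ^ 2 + b ^ 2 = 1 := by rw [ha2, hb2]; field_simp; ring
    have hab0 : a ^ 2 * lamP + b ^ 2 * lamM = 0 := by rw [ha2, hb2]; field_simp; ring
    have habN : (a * lamP) ^ 2 + (b * lamM) ^ 2 = -(lamP * lamM) := by
      rw [mul_pow, mul_pow, ha2, hb2]; field_simp; ring
    set u : Fin n → ℂ := ⇑(hC.eigenvectorBasis iP) with hu
    set v : Fin n → ℂ := ⇑(hC.eigenvectorBasis iM) with hv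
    have horm := orthonormal_iff_ite.mp hC.eigenvectorBasis.orthonormal
    have hdot : ∀ i j : Fin n, star ⇑(hC.eigenvectorBasis i) ⬝ᵥ ⇑(hC.eigenvectorBasis j)
        = if i = j then 1 else 0 := by
      intro i j
      rw [dotProduct_comm, ← EuclideanSpace.inner_eq_star_dotProduct]
      exact horm i j
    have huu : star u ⬝ᵥ u = 1 := by simpa using hdot iP iP
    have hvv : star v ⬝ᵥ v = 1 := by simpa using hdot iM iM
    have huv : star u ⬝ᵥ v = 0 := by simpa [hne] using hdot iP iM
    have hvu : star v ⬝ᵥ u = 0 := by simpa [hne.symm] using hdot iM iP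
    have hCu : C *ᵥ u = ((lamP : ℂ)) • u := by
      rw [hu, hC.mulVec_eigenvectorBasis iP, hP]
      ext j; simp [Complex.real_smul]
    have hCv : C *ᵥ v = ((lamM : ℂ)) • v := by
      rw [hv, hC.mulVec_eigenvectorBasis iM, hM]
      ext j; simp [Complex.real_smul]
    have hbil : ∀ p q r s : ℝ, star ((p:ℂ) • u + (q:ℂ) • v) ⬝ᵥ ((r:ℂ) • u + (s:ℂ) • v)
        = ((p * r + q * s : ℝ) : ℂ) := by
      intro p q r s
      simp only [dotProduct_add, add_dotProduct, star_add, star_smul, smul_dotProduct,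
        dotProduct_smul, huu, hvv, huv, hvu, smul_eq_mul, star_trivial, RingHom.id_apply,
        Complex.star_def, Complex.conj_ofReal]
      push_cast
      ring
    have hCx : C *ᵥ ((a:ℂ) • u + (b:ℂ) • v)
        = ((a*lamP : ℝ):ℂ) • u + ((b*lamM : ℝ):ℂ) • v := by
      rw [mulVec_add, mulVec_smul, mulVec_smul, hCu, hCv, smul_smul, smul_smul]
      push_cast
      ring_nf
    refine ⟨(a : ℂ) • u + (b : ℂ) • v, ?_, ?_, ?_⟩
    · rw [hbil]
      rw [show a * a + b * b = 1 by nlinarith]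
      norm_num
    · rw [hCx, hbil]
      rw [show a * (a*lamP) + b * (b*lamM) = 0 by nlinarith]
      norm_num
    · rw [hCx]
      have hsq := hbil (a*lamP) (b*lamM) (a*lamP) (b*lamM)
      rw [show a*lamP * (a*lamP) + b*lamM * (b*lamM) = -(lamP*lamM) by nlinarith] at hsq
      have hnorm : (‖(EuclideanSpace.equiv (Fin n) ℂ).symm
            (((a*lamP : ℝ):ℂ) • u + ((b*lamM : ℝ):ℂ) • v)‖ ^ 2 : ℝ)
          = Complex.re (star (((a*lamP : ℝ):ℂ) • u + ((b*lamM : ℝ):ℂ) • v) ⬝ᵥ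
            (((a*lamP : ℝ):ℂ) • u + ((b*lamM : ℝ):ℂ) • v)) := by
        rw [← @inner_self_eq_norm_sq ℂ, EuclideanSpace.inner_eq_star_dotProduct, dotProduct_comm]
        rfl
      rw [hsq] at hnorm
      simp only [Complex.ofReal_re] at hnorm
      rw [← Real.sqrt_sq (norm_nonneg _), hnorm]
end

section
/- Let A, C ∈ ℂ^{n×n} be Hermitian with C indefinite. If there exists σ_0 ∈ ℝ such that the pair (A − σ_0I, C) is singular, i.e., det(A − σ_0I − μC) = 0 for all μ ∈ ℝ, then for every μ ∈ ℝ there exists a unit vector x ∈ ℂ^n with (A − μC)x = σ_0 x and x^H C x = 0; in particular, (μ, σ_0) is a 2D-eigenvalue of (A, C) for every μ ∈ ℝ, so (A, C) has infinitely many 2D-eigenvalues. -/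
/-!
Put `B = A - σ₀ I`, so that `det (B - νC) = 0` for every real `ν`. If `(B - ν₁C)y = 0` and
`(B - ν₂C)z = 0` with `ν₁ ≠ ν₂`, then `yᴴBz` equals both `ν₂ yᴴCz` and `ν₁ yᴴCz`, so `yᴴCz = 0`:
kernel vectors for distinct parameters are `C`-orthogonal. Pick unit kernel vectors `z_k` of
`B - ν_k C` with `ν_k → μ` distinct; a subsequence converges to a unit vector `x`, which lies in the
kernel of `B - μC` by continuity. Passing to the limit twice in `z_jᴴ C z_k = 0` (`j ≠ k`) gives
`xᴴCx = 0`.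
-/

open Matrix

open Filter Topology

theorem Filter.Tendsto.apply_self_eq_of_pairwise {X Y : Type*} [TopologicalSpace X]
    [TopologicalSpace Y] [T1Space Y] {f : X → X → Y} {c : Y}
    (hf_left : ∀ w, Continuous (f · w)) (hf_right : ∀ y, Continuous (f y))
    {z : ℕ → X} {x : X} (hx : Tendsto z atTop (𝓝 x))
    (hz : Pairwise fun j k => f (z j) (z k) = c) :
    f x x = c := by
  have hx_left (k : ℕ) : f x (z k) = c :=
    (isClosed_singleton.preimage (hf_left (z k))).mem_of_tendsto hx
      ((eventually_ne_atTop k).mono fun _ hj => hz hj)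
  exact (isClosed_singleton.preimage (hf_right x)).mem_of_tendsto hx (.of_forall hx_left)

namespace Matrix

variable {ι : Type*} [Fintype ι]

theorem star_dotProduct_self_eq_norm_sq (x : ι → ℂ) :
    star x ⬝ᵥ x = ((‖WithLp.toLp 2 x‖ ^ 2 : ℝ) : ℂ) := by
  rw [dotProduct_comm, ← EuclideanSpace.inner_toLp_toLp, inner_self_eq_norm_sq_to_K]
  push_cast
  rfl

theorem isCompact_setOf_star_dotProduct_self_eq_one :
    IsCompact {x : ι → ℂ | star x ⬝ᵥ x = 1} := by
  have hsphere : {x : ι → ℂ | star x ⬝ᵥ x = 1} =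
      (PiLp.homeomorph 2 fun _ : ι => ℂ).symm ⁻¹' Metric.sphere 0 1 := by
    ext x
    rw [Set.mem_ofPred_eq, Set.mem_preimage, mem_sphere_zero_iff_norm,
      star_dotProduct_self_eq_norm_sq]
    change _ ↔ ‖WithLp.toLp 2 x‖ = 1
    norm_cast
    exact pow_eq_one_iff_of_nonneg (norm_nonneg _) two_ne_zero
  rw [hsphere, Homeomorph.isCompact_preimage]
  exact isCompact_sphere 0 1

theorem exists_star_dotProduct_self_eq_one_mulVec_eq_zero [DecidableEq ι] {M : Matrix ι ι ℂ}
    (h : M.det = 0) : ∃ x, star x ⬝ᵥ x = 1 ∧ M *ᵥ x = 0 := by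
  obtain ⟨v, hv0, hv⟩ := exists_mulVec_eq_zero_iff.mpr h
  have hr : ‖WithLp.toLp 2 v‖ ≠ 0 := by simpa using hv0
  refine ⟨((‖WithLp.toLp 2 v‖⁻¹ : ℝ) : ℂ) • v, ?_, by rw [mulVec_smul, hv, smul_zero]⟩
  rw [star_dotProduct_self_eq_norm_sq, WithLp.toLp_smul, norm_smul]
  simp [hr]

theorem IsHermitian.star_dotProduct_mulVec {B : Matrix ι ι ℂ} (hB : B.IsHermitian)
    (y z : ι → ℂ) : star y ⬝ᵥ (B *ᵥ z) = star (B *ᵥ y) ⬝ᵥ z := by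
  rw [star_mulVec, hB.eq, dotProduct_mulVec]

theorem IsHermitian.star_dotProduct_mulVec_eq_zero_of_mulVec_eq_zero {B C : Matrix ι ι ℂ}
    (hB : B.IsHermitian) (hC : C.IsHermitian) {ν₁ ν₂ : ℝ} (hν : ν₁ ≠ ν₂) {y z : ι → ℂ}
    (hy : (B - (ν₁ : ℂ) • C) *ᵥ y = 0) (hz : (B - (ν₂ : ℂ) • C) *ᵥ z = 0) :
    star y ⬝ᵥ (C *ᵥ z) = 0 := by
  rw [sub_mulVec, smul_mulVec, sub_eq_zero] at hy hz
  have h : (ν₂ : ℂ) * (star y ⬝ᵥ (C *ᵥ z)) = ν₁ * (star y ⬝ᵥ (C *ᵥ z)) := by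
    rw [← smul_eq_mul, ← dotProduct_smul, ← hz, hB.star_dotProduct_mulVec, hy, star_smul,
      smul_dotProduct, ← hC.star_dotProduct_mulVec, Complex.star_def, Complex.conj_ofReal,
      smul_eq_mul]
  exact (mul_eq_mul_right_iff.mp h).resolve_left (by exact_mod_cast hν.symm)

theorem IsHermitian.exists_isotropic_mulVec_eq_zero_of_forall_det_eq_zero [DecidableEq ι]
    {B C : Matrix ι ι ℂ} (hB : B.IsHermitian) (hC : C.IsHermitian)
    (hdet : ∀ ν : ℝ, (B - (ν : ℂ) • C).det = 0) (μ : ℝ) :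
    ∃ x, star x ⬝ᵥ x = 1 ∧ (B - (μ : ℂ) • C) *ᵥ x = 0 ∧ star x ⬝ᵥ (C *ᵥ x) = 0 := by
  set ν : ℕ → ℝ := fun k => μ + 1 / ((k : ℝ) + 1)
  have hν_inj : Function.Injective ν := fun a b h => by simpa [ν] using h
  have hν_lim : Tendsto ν atTop (𝓝 μ) := by
    simpa [ν] using tendsto_one_div_add_atTop_nhds_zero_nat.const_add μ
  choose z hz_unit hz_ker using
    fun k => exists_star_dotProduct_self_eq_one_mulVec_eq_zero (hdet (ν k))
  obtain ⟨x, hx_unit, φ, hφ, hx⟩ :=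
    isCompact_setOf_star_dotProduct_self_eq_one.tendsto_subseq hz_unit
  refine ⟨x, hx_unit, ?_, ?_⟩
  · have hclosed : IsClosed {p : ℝ × (ι → ℂ) | (B - (p.1 : ℂ) • C) *ᵥ p.2 = 0} :=
      isClosed_eq (by fun_prop) continuous_const
    apply hclosed.mem_of_tendsto ((hν_lim.comp hφ.tendsto_atTop).prodMk_nhds hx)
    exact .of_forall fun j => hz_ker (φ j)
  · refine hx.apply_self_eq_of_pairwise (f := fun y w => star y ⬝ᵥ (C *ᵥ w)) (by fun_prop)
      (by fun_prop) fun j k hjk => ?_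
    exact hB.star_dotProduct_mulVec_eq_zero_of_mulVec_eq_zero hC
      (hν_inj.ne (hφ.injective.ne hjk)) (hz_ker _) (hz_ker _)

end Matrix

theorem singular_pencil_implies_infinitely_many_2DEigenvalues_general
    {n : ℕ} (A C : Matrix (Fin n) (Fin n) ℂ)
    (hA : A.IsHermitian) (hC : C.IsHermitian)
    (σ₀ : ℝ)
    (hsing : ∀ μ : ℝ, (A - (σ₀ : ℂ) • (1 : Matrix (Fin n) (Fin n) ℂ)
      - (μ : ℂ) • C).det = 0) :
    (∀ μ : ℝ, ∃ x : Fin n → ℂ, star x ⬝ᵥ x = 1 ∧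
      (A - (μ : ℂ) • C) *ᵥ x = ((σ₀ : ℝ) : ℂ) • x ∧
      star x ⬝ᵥ (C *ᵥ x) = 0) ∧
    (∀ μ : ℝ, Is2DEigenvalue A C μ σ₀) ∧
    {p : ℝ × ℝ | Is2DEigenvalue A C p.1 p.2}.Infinite := by
  have hB : (A - (σ₀ : ℂ) • (1 : Matrix (Fin n) (Fin n) ℂ)).IsHermitian :=
    hA.sub (isHermitian_one.smul (Complex.conj_ofReal σ₀))
  have main (μ : ℝ) : ∃ x : Fin n → ℂ, star x ⬝ᵥ x = 1 ∧
      (A - (μ : ℂ) • C) *ᵥ x = ((σ₀ : ℝ) : ℂ) • x ∧ star x ⬝ᵥ (C *ᵥ x) = 0 := by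
    obtain ⟨x, hx_unit, hx_ker, hx_iso⟩ :=
      hB.exists_isotropic_mulVec_eq_zero_of_forall_det_eq_zero hC hsing μ
    refine ⟨x, hx_unit, ?_, hx_iso⟩
    rwa [sub_right_comm, sub_mulVec, smul_mulVec, one_mulVec, sub_eq_zero] at hx_ker
  have h2D (μ : ℝ) : Is2DEigenvalue A C μ σ₀ :=
    let ⟨x, hx_unit, hx_eig, hx_iso⟩ := main μ
    ⟨x, hx_eig, hx_iso, hx_unit⟩
  exact ⟨main, h2D, Set.infinite_of_injective_forall_mem (Prod.mk_left_injective σ₀) h2D⟩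

/-- For Hermitian `A, C` with `C` indefinite, if for some
`σ₀ ∈ ℝ` the pair `(A - σ₀I, C)` is singular (`det (A - σ₀I - μC) = 0` for all
`μ`), then for every `μ` there is a unit vector `x` with `(A - μC)x = σ₀x` and
`xᴴCx = 0`; in particular `(μ, σ₀)` is a 2D-eigenvalue for every `μ`, so the
set of 2D-eigenvalues of `(A, C)` is infinite. -/
theorem singular_pencil_implies_infinitely_many_2DEigenvalues
    {n : ℕ} (A C : Matrix (Fin n) (Fin n) ℂ)
    (hA : A.IsHermitian) (hC : C.IsHermitian) (hCind : IsIndefinite hC)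
    (σ₀ : ℝ)
    (hsing : ∀ μ : ℝ, (A - (σ₀ : ℂ) • (1 : Matrix (Fin n) (Fin n) ℂ)
      - (μ : ℂ) • C).det = 0) :
    (∀ μ : ℝ, ∃ x : Fin n → ℂ, star x ⬝ᵥ x = 1 ∧
      (A - (μ : ℂ) • C) *ᵥ x = ((σ₀ : ℝ) : ℂ) • x ∧
      star x ⬝ᵥ (C *ᵥ x) = 0) ∧
    (∀ μ : ℝ, Is2DEigenvalue A C μ σ₀) ∧
    {p : ℝ × ℝ | Is2DEigenvalue A C p.1 p.2}.Infinite :=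
  singular_pencil_implies_infinitely_many_2DEigenvalues_general A C hA hC σ₀ hsing
end

section
/- Let A, B ∈ ℂ^{n×n} be Hermitian matrices. Then inf_{x ∈ ℂ^n, x ≠ 0} max{ ρ_A(x), ρ_B(x) } = max_{μ ∈ [0,1]} λ_min((1 − μ)A + μB), where λ_min denotes the smallest eigenvalue of a Hermitian matrix, and the maximum on the right-hand side is attained for some μ ∈ [0,1]. -/
open Matrix

theorem combo_isHermitian {n : ℕ} {A B : Matrix (Fin n) (Fin n) ℂ}
    (hA : A.IsHermitian) (hB : B.IsHermitian) (μ : ℝ) :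
    ((((1 - μ : ℝ) : ℂ) • A) + (((μ : ℝ) : ℂ) • B)).IsHermitian := by
  unfold Matrix.IsHermitian at *
  rw [Matrix.conjTranspose_add, Matrix.conjTranspose_smul, Matrix.conjTranspose_smul, hA, hB]
  simp

/-- The Rayleigh quotient `ρ_M(x) = (xᴴ M x)/(xᴴ x)` of a Hermitian matrix
(its real part; the quotient is real for Hermitian `M`). -/
noncomputable def rayleigh {n : ℕ} (M : Matrix (Fin n) (Fin n) ℂ)
    (x : Fin n → ℂ) : ℝ :=
  ((star x ⬝ᵥ (M *ᵥ x)) / (star x ⬝ᵥ x)).re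


section Helpers

variable {n : ℕ} {M : Matrix (Fin n) (Fin n) ℂ}

lemma quad_coords (hM : M.IsHermitian) (x : Fin n → ℂ) :
    ∃ y : Fin n → ℂ, ((hM.eigenvectorUnitary : Matrix (Fin n) (Fin n) ℂ) *ᵥ y = x) ∧
      star x ⬝ᵥ (M *ᵥ x) = ∑ i, (hM.eigenvalues i : ℂ) * (Complex.normSq (y i) : ℂ) ∧
      star x ⬝ᵥ x = ∑ i, (Complex.normSq (y i) : ℂ) ∧
      M *ᵥ x = (hM.eigenvectorUnitary : Matrix (Fin n) (Fin n) ℂ) *ᵥ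
        (fun i => (hM.eigenvalues i : ℂ) * y i) := by
  set U := (hM.eigenvectorUnitary : Matrix (Fin n) (Fin n) ℂ) with hUdef
  have hU1 : U * star U = 1 := Matrix.mem_unitaryGroup_iff.mp hM.eigenvectorUnitary.2
  have hU2 : star U * U = 1 := Matrix.mem_unitaryGroup_iff'.mp hM.eigenvectorUnitary.2
  set y := star U *ᵥ x with hy
  have hstary : star y = star x ᵥ* U := by
    rw [hy, star_mulVec]
    congr 1
    simp [Matrix.star_eq_conjTranspose, conjTranspose_conjTranspose]
  have hMx : M *ᵥ x = U *ᵥ (fun i => (hM.eigenvalues i : ℂ) * y i) := by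
    conv_lhs => rw [hM.spectral_theorem, Unitary.conjStarAlgAut_apply]
    rw [← hUdef, ← mulVec_mulVec, ← mulVec_mulVec]
    have hd : diagonal (RCLike.ofReal ∘ hM.eigenvalues) *ᵥ (star U *ᵥ x)
        = fun i => (hM.eigenvalues i : ℂ) * y i := by
      funext i
      rw [mulVec_diagonal]
      rfl
    rw [hd]
  refine ⟨y, ?_, ?_, ?_, hMx⟩
  · rw [hy, mulVec_mulVec, hU1, one_mulVec]
  · rw [hMx, dotProduct_mulVec, ← hstary, dotProduct]
    refine Finset.sum_congr rfl fun i _ => ?_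
    have : (star y) i * ((hM.eigenvalues i : ℂ) * y i)
        = (hM.eigenvalues i : ℂ) * ((starRingEnd ℂ) (y i) * y i) := by
      simp [Pi.star_apply, Complex.star_def]; ring
    rw [this, ← Complex.normSq_eq_conj_mul_self]
  · have : star x ⬝ᵥ x = star y ⬝ᵥ y := by
      rw [hstary, hy, dotProduct_mulVec, vecMul_vecMul, hU1, vecMul_one]
    rw [this, dotProduct]
    refine Finset.sum_congr rfl fun i _ => ?_
    simp [Pi.star_apply, Complex.star_def, ← Complex.normSq_eq_conj_mul_self]

/-- real quadratic form -/
noncomputable def quadRe (M : Matrix (Fin n) (Fin n) ℂ) (x : Fin n → ℂ) : ℝ :=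
  (star x ⬝ᵥ (M *ᵥ x)).re

noncomputable def dRe (x : Fin n → ℂ) : ℝ := (star x ⬝ᵥ x).re

lemma dot_self_eq (x : Fin n → ℂ) :
    star x ⬝ᵥ x = ((∑ i, Complex.normSq (x i) : ℝ) : ℂ) := by
  push_cast
  simp [dotProduct, Complex.normSq_eq_conj_mul_self, Complex.star_def]

lemma dRe_eq (x : Fin n → ℂ) : dRe x = ∑ i, Complex.normSq (x i) := by
  rw [dRe, dot_self_eq, Complex.ofReal_re]

lemma dot_self_eq_dRe (x : Fin n → ℂ) : star x ⬝ᵥ x = ((dRe x : ℝ) : ℂ) := by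
  rw [dRe_eq, dot_self_eq]

lemma dRe_pos {x : Fin n → ℂ} (hx : x ≠ 0) : 0 < dRe x := by
  rw [dRe_eq]
  obtain ⟨i, hi⟩ : ∃ i, x i ≠ 0 := by
    by_contra h
    push_neg at h
    exact hx (funext h)
  have : 0 < Complex.normSq (x i) := Complex.normSq_pos.2 hi
  exact Finset.sum_pos' (fun j _ => Complex.normSq_nonneg _) ⟨i, Finset.mem_univ i, this⟩

lemma dRe_nonneg (x : Fin n → ℂ) : 0 ≤ dRe x := by
  rw [dRe_eq]
  exact Finset.sum_nonneg fun j _ => Complex.normSq_nonneg _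

lemma rayleigh_eq {x : Fin n → ℂ} (M : Matrix (Fin n) (Fin n) ℂ) :
    rayleigh M x = quadRe M x / dRe x := by
  rw [rayleigh, dot_self_eq_dRe, Complex.div_ofReal_re, quadRe, dRe]

noncomputable def lmin (hn : 0 < n) (hM : M.IsHermitian) : ℝ :=
  sortedEig hM ⟨n - 1, Nat.sub_lt hn one_pos⟩

lemma lmin_le_eigenvalues (hn : 0 < n) (hM : M.IsHermitian) (i : Fin n) :
    lmin hn hM ≤ hM.eigenvalues i := by
  have hrev : (⟨n - 1, Nat.sub_lt hn one_pos⟩ : Fin n).rev = ⟨0, hn⟩ := by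
    ext; simp [Fin.rev]; omega
  have h := Tuple.monotone_sort hM.eigenvalues
    (a := ⟨0, hn⟩) (b := (Tuple.sort hM.eigenvalues).symm i) (by exact Fin.mk_le_mk.2 (Nat.zero_le _))
  simpa [lmin, sortedEig, hrev] using h

lemma lmin_eq_eigenvalues (hn : 0 < n) (hM : M.IsHermitian) :
    ∃ i, lmin hn hM = hM.eigenvalues i :=
  ⟨_, rfl⟩

lemma lmin_mul_dRe_le_quadRe (hn : 0 < n) (hM : M.IsHermitian) (x : Fin n → ℂ) :
    lmin hn hM * dRe x ≤ quadRe M x := by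
  obtain ⟨y, hUy, hq, hd, hMx⟩ := quad_coords hM x
  have hqre : quadRe M x = ∑ i, hM.eigenvalues i * Complex.normSq (y i) := by
    rw [quadRe, hq]
    norm_cast
  have hdre : dRe x = ∑ i, Complex.normSq (y i) := by
    rw [dRe, hd]
    norm_cast
  rw [hqre, hdre, Finset.mul_sum]
  exact Finset.sum_le_sum fun i _ =>
    mul_le_mul_of_nonneg_right (lmin_le_eigenvalues hn hM i) (Complex.normSq_nonneg _)

lemma eigen_of_quadRe_eq (hn : 0 < n) (hM : M.IsHermitian) (x : Fin n → ℂ)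
    (h : quadRe M x = lmin hn hM * dRe x) :
    M *ᵥ x = ((lmin hn hM : ℝ) : ℂ) • x := by
  obtain ⟨y, hUy, hq, hd, hMx⟩ := quad_coords hM x
  have hqre : quadRe M x = ∑ i, hM.eigenvalues i * Complex.normSq (y i) := by
    rw [quadRe, hq]; norm_cast
  have hdre : dRe x = ∑ i, Complex.normSq (y i) := by
    rw [dRe, hd]; norm_cast
  have hsum : ∑ i, (hM.eigenvalues i - lmin hn hM) * Complex.normSq (y i) = 0 := by
    have := h
    rw [hqre, hdre, Finset.mul_sum] at this
    simp only [sub_mul]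
    rw [Finset.sum_sub_distrib]
    linarith
  have hzero : ∀ i ∈ Finset.univ, (hM.eigenvalues i - lmin hn hM) * Complex.normSq (y i) = 0 :=
    (Finset.sum_eq_zero_iff_of_nonneg (fun i _ =>
      mul_nonneg (sub_nonneg.2 (lmin_le_eigenvalues hn hM i)) (Complex.normSq_nonneg _))).1 hsum
  have hy : ∀ i, (hM.eigenvalues i : ℂ) * y i = ((lmin hn hM : ℝ) : ℂ) * y i := by
    intro i
    rcases mul_eq_zero.1 (hzero i (Finset.mem_univ i)) with h1 | h2
    · rw [sub_eq_zero] at h1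
      rw [h1]
    · rw [Complex.normSq_eq_zero.1 h2]
      simp
  rw [hMx, ← hUy]
  have : (fun i => (hM.eigenvalues i : ℂ) * y i) = ((lmin hn hM : ℝ) : ℂ) • y := by
    funext i
    rw [hy i]
    rfl
  rw [this, mulVec_smul]

lemma exists_unit_eigenvector (hn : 0 < n) (hM : M.IsHermitian) :
    ∃ x : Fin n → ℂ, star x ⬝ᵥ x = 1 ∧ M *ᵥ x = ((lmin hn hM : ℝ) : ℂ) • x := by
  obtain ⟨i, hi⟩ := lmin_eq_eigenvalues hn hM
  refine ⟨⇑(hM.eigenvectorBasis i), ?_, ?_⟩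
  · have h1 : ‖hM.eigenvectorBasis i‖ = 1 := hM.eigenvectorBasis.orthonormal.1 i
    have := EuclideanSpace.inner_eq_star_dotProduct (hM.eigenvectorBasis i) (hM.eigenvectorBasis i)
    rw [dotProduct_comm, ← this, inner_self_eq_norm_sq_to_K, h1]
    norm_num
  · rw [hM.mulVec_eigenvectorBasis i, ← hi]
    funext j
    simp [Complex.real_smul]

lemma quadRe_of_eigen {x : Fin n → ℂ} {c : ℝ} (M : Matrix (Fin n) (Fin n) ℂ)
    (h : M *ᵥ x = (c : ℂ) • x) : quadRe M x = c * dRe x := by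
  rw [quadRe, h, dotProduct_smul, dot_self_eq_dRe]
  push_cast
  simp


lemma quadRe_smul_add (a b : ℝ) (A B : Matrix (Fin n) (Fin n) ℂ) (x : Fin n → ℂ) :
    quadRe (((a : ℝ) : ℂ) • A + ((b : ℝ) : ℂ) • B) x = a * quadRe A x + b * quadRe B x := by
  simp only [quadRe, add_mulVec, smul_mulVec, dotProduct_add, dotProduct_smul,
    Complex.add_re, smul_eq_mul]
  simp [Complex.mul_re]

lemma quadRe_sub (A B : Matrix (Fin n) (Fin n) ℂ) (x : Fin n → ℂ) :
    quadRe (B - A) x = quadRe B x - quadRe A x := by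
  simp only [quadRe, sub_mulVec, dotProduct_sub, Complex.sub_re]

lemma continuous_dot (M : Matrix (Fin n) (Fin n) ℂ) :
    Continuous fun x : Fin n → ℂ => star x ⬝ᵥ (M *ᵥ x) := by
  simp only [dotProduct, mulVec, Pi.star_apply]
  refine continuous_finset_sum _ fun i _ => Continuous.mul ?_ ?_
  · exact Complex.continuous_conj.comp (continuous_apply i)
  · exact continuous_finset_sum _ fun j _ => continuous_const.mul (continuous_apply j)

lemma continuous_quadRe (M : Matrix (Fin n) (Fin n) ℂ) :
    Continuous fun x : Fin n → ℂ => quadRe M x :=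
  Complex.continuous_re.comp (continuous_dot M)

lemma isCompact_unitSet :
    IsCompact {x : Fin n → ℂ | star x ⬝ᵥ x = 1} := by
  have hcont : Continuous fun x : Fin n → ℂ => star x ⬝ᵥ x := by
    simp only [dotProduct, Pi.star_apply]
    exact continuous_finset_sum _ fun i _ =>
      (Complex.continuous_conj.comp (continuous_apply i)).mul (continuous_apply i)
  have hclosed : IsClosed {x : Fin n → ℂ | star x ⬝ᵥ x = 1} :=
    isClosed_eq hcont continuous_const
  have hbdd : {x : Fin n → ℂ | star x ⬝ᵥ x = 1} ⊆ Metric.closedBall 0 1 := by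
    intro x hx
    have hd : dRe x = 1 := by rw [dRe, hx]; simp
    rw [Metric.mem_closedBall, dist_zero_right]
    refine (pi_norm_le_iff_of_nonneg zero_le_one).2 fun i => ?_
    have h1 : Complex.normSq (x i) ≤ 1 := by
      rw [dRe_eq] at hd
      have := Finset.single_le_sum (f := fun j => Complex.normSq (x j))
        (fun j _ => Complex.normSq_nonneg _) (Finset.mem_univ i)
      linarith
    have : ‖x i‖ ^ 2 ≤ 1 := by
      rw [Complex.sq_norm]; exact h1
    nlinarith [norm_nonneg (x i)]
  exact Metric.isCompact_of_isClosed_isBounded hclosed (Metric.isBounded_closedBall.subset hbdd)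

lemma dRe_of_unit {x : Fin n → ℂ} (hx : star x ⬝ᵥ x = 1) : dRe x = 1 := by
  rw [dRe, hx]; simp

lemma quad_bound (C : Matrix (Fin n) (Fin n) ℂ) :
    ∃ K : ℝ, 0 ≤ K ∧ ∀ x : Fin n → ℂ, star x ⬝ᵥ x = 1 → |quadRe C x| ≤ K := by
  obtain ⟨K, hK⟩ := isCompact_unitSet.exists_bound_of_continuousOn
    (continuous_quadRe C).continuousOn
  exact ⟨max K 0, le_max_right _ _, fun x hx =>
    le_trans (by simpa [Real.norm_eq_abs] using hK x hx) (le_max_left _ _)⟩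

lemma perturb (hn : 0 < n) (hM : M.IsHermitian) (C : Matrix (Fin n) (Fin n) ℂ)
    (ε₀ : ℝ) (hε₀ : 0 < ε₀)
    (H : ∀ ε : ℝ, 0 < ε → ε ≤ ε₀ →
      ∃ x, star x ⬝ᵥ x = 1 ∧ quadRe M x + ε * quadRe C x ≤ lmin hn hM) :
    ∃ p, star p ⬝ᵥ p = 1 ∧ M *ᵥ p = ((lmin hn hM : ℝ) : ℂ) • p ∧ quadRe C p ≤ 0 := by
  obtain ⟨K, hK0, hK⟩ := quad_bound C
  set L := lmin hn hM with hL
  have hεpos : ∀ k : ℕ, 0 < min (1/((k:ℝ)+1)) ε₀ := fun k => lt_min (by positivity) hε₀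
  have hseq : ∀ k : ℕ, ∃ x, star x ⬝ᵥ x = 1 ∧
      quadRe M x + (min (1/((k:ℝ)+1)) ε₀) * quadRe C x ≤ L := by
    intro k
    exact H _ (hεpos k) (min_le_right _ _)
  choose x hx1 hx2 using hseq
  obtain ⟨p, hpS, φ, hφ, hφt⟩ := isCompact_unitSet.tendsto_subseq (fun k => hx1 k)
  have hlow : ∀ k, L ≤ quadRe M (x k) := fun k => by
    have h := lmin_mul_dRe_le_quadRe hn hM (x k)
    rw [dRe_of_unit (hx1 k)] at h
    linarith
  have hCneg : ∀ k, quadRe C (x k) ≤ 0 := fun k => by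
    have h2 := hx2 k
    have h1 := hlow k
    nlinarith [hεpos k]
  have hquadle : ∀ k, quadRe M (x k) ≤ L + (1/((k:ℝ)+1)) * K := fun k => by
    have h2 := hx2 k
    have hb := hK (x k) (hx1 k)
    have hmin1 : min (1/((k:ℝ)+1)) ε₀ ≤ 1/((k:ℝ)+1) := min_le_left _ _
    have : (min (1/((k:ℝ)+1)) ε₀) * (- quadRe C (x k)) ≤ (1/((k:ℝ)+1)) * K := by
      apply mul_le_mul hmin1 ?_ ?_ (by positivity)
      · rw [abs_le] at hb; linarith
      · linarith [hCneg k]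
    linarith
  have htend : Filter.Tendsto (fun k => x (φ k)) Filter.atTop (nhds p) := hφt
  have ht1 : Filter.Tendsto (fun k => quadRe M (x (φ k))) Filter.atTop (nhds (quadRe M p)) :=
    ((continuous_quadRe M).tendsto p).comp htend
  have htC : Filter.Tendsto (fun k => quadRe C (x (φ k))) Filter.atTop (nhds (quadRe C p)) :=
    ((continuous_quadRe C).tendsto p).comp htend
  have hCp : quadRe C p ≤ 0 :=
    le_of_tendsto htC (Filter.Eventually.of_forall fun k => hCneg (φ k))
  have hgbound : ∀ k, quadRe M (x (φ k)) ≤ L + (1/((k:ℝ)+1)) * K := fun k => by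
    have h1 := hquadle (φ k)
    have hφk : (k:ℝ) ≤ (φ k : ℝ) := by exact_mod_cast hφ.le_apply
    have : (1:ℝ)/((φ k : ℝ)+1) ≤ 1/((k:ℝ)+1) := by
      apply one_div_le_one_div_of_le (by positivity)
      linarith
    nlinarith
  have htg : Filter.Tendsto (fun k : ℕ => L + (1/((k:ℝ)+1)) * K) Filter.atTop (nhds L) := by
    have h0 : Filter.Tendsto (fun k : ℕ => (1/((k:ℝ)+1)) * K) Filter.atTop (nhds 0) := by
      simpa using tendsto_one_div_add_atTop_nhds_zero_nat.mul_const K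
    simpa using Filter.Tendsto.add (tendsto_const_nhds (x := L)) h0
  have hMp_le : quadRe M p ≤ L :=
    le_of_tendsto_of_tendsto' ht1 htg hgbound
  have hMp_ge : L ≤ quadRe M p := by
    have h := lmin_mul_dRe_le_quadRe hn hM p
    rw [dRe_of_unit hpS] at h
    linarith
  have heig : M *ᵥ p = ((L : ℝ) : ℂ) • p := by
    apply eigen_of_quadRe_eq hn hM
    rw [dRe_of_unit hpS]
    linarith
  exact ⟨p, hpS, heig, hCp⟩

lemma quadRe_real_smul (M : Matrix (Fin n) (Fin n) ℂ) (c : ℝ) (v : Fin n → ℂ) :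
    quadRe M (((c : ℝ) : ℂ) • v) = c ^ 2 * quadRe M v := by
  have hstar : star (((c : ℝ) : ℂ) • v) = ((c : ℝ) : ℂ) • star v := by
    rw [star_smul]
    congr 1
    simp [Complex.star_def]
  rw [quadRe, hstar, mulVec_smul, dotProduct_smul, smul_dotProduct, smul_eq_mul, smul_eq_mul,
    ← mul_assoc, ← Complex.ofReal_mul, quadRe]
  simp [Complex.mul_re]
  exact Or.inl (sq c).symm

lemma maxhelper {μs L γ d qA qB : ℝ} (hd : 0 < d)
    (hqA : qA = L * d - μs * γ) (hqB : qB = L * d + (1 - μs) * γ)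
    (h1 : 0 ≤ μs * γ) (h2 : (1 - μs) * γ ≤ 0) (h3 : μs * γ = 0 ∨ (1 - μs) * γ = 0) :
    max (qA / d) (qB / d) = L := by
  rcases h3 with h3 | h3
  · have ha : qA / d = L := by rw [hqA, h3]; field_simp; ring
    have hb : qB / d ≤ L := by
      rw [div_le_iff₀ hd, hqB]; linarith
    rw [max_eq_left (by rw [ha]; exact hb), ha]
  · have hb : qB / d = L := by rw [hqB, h3]; field_simp; ring
    have ha : qA / d ≤ L := by
      rw [div_le_iff₀ hd, hqA]; linarith
    rw [max_eq_right (by rw [hb]; exact ha), hb]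


end Helpers

/-- For Hermitian `A, B`,
`inf_{x ≠ 0} max {ρ_A(x), ρ_B(x)} = max_{μ ∈ [0,1]} λ_min((1-μ)A + μB)`,
and the maximum on the right-hand side is attained at some `μ ∈ [0,1]`. -/
theorem inf_max_rayleigh_eq_max_lambdaMin
    {n : ℕ} (hn : 0 < n) (A B : Matrix (Fin n) (Fin n) ℂ)
    (hA : A.IsHermitian) (hB : B.IsHermitian) :
    ∃ μstar ∈ Set.Icc (0 : ℝ) 1,
      (∀ μ ∈ Set.Icc (0 : ℝ) 1,
        sortedEig (combo_isHermitian hA hB μ) ⟨n - 1, Nat.sub_lt hn one_pos⟩ ≤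
          sortedEig (combo_isHermitian hA hB μstar) ⟨n - 1, Nat.sub_lt hn one_pos⟩) ∧
      sortedEig (combo_isHermitian hA hB μstar) ⟨n - 1, Nat.sub_lt hn one_pos⟩ =
        sInf {r : ℝ | ∃ x : Fin n → ℂ, x ≠ 0 ∧ r = max (rayleigh A x) (rayleigh B x)} := by
  classical
  set Mc : ℝ → Matrix (Fin n) (Fin n) ℂ :=
    fun μ => (((1 - μ : ℝ) : ℂ) • A) + (((μ : ℝ) : ℂ) • B) with hMc
  have hHerm : ∀ μ, (Mc μ).IsHermitian := fun μ => combo_isHermitian hA hB μ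
  set f : ℝ → ℝ := fun μ => lmin hn (combo_isHermitian hA hB μ) with hf
  have hcombo : ∀ (μ : ℝ) (x : Fin n → ℂ),
      quadRe (Mc μ) x = (1 - μ) * quadRe A x + μ * quadRe B x :=
    fun μ x => quadRe_smul_add (1 - μ) μ A B x
  have hattain : ∀ μ : ℝ, ∃ x, star x ⬝ᵥ x = 1 ∧
      Mc μ *ᵥ x = ((f μ : ℝ) : ℂ) • x ∧ quadRe (Mc μ) x = f μ := by
    intro μ
    obtain ⟨x, hx1, hx2⟩ := exists_unit_eigenvector hn (combo_isHermitian hA hB μ)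
    refine ⟨x, hx1, hx2, ?_⟩
    rw [quadRe_of_eigen _ hx2, dRe_of_unit hx1, mul_one]
  obtain ⟨KA, hKA0, hKA⟩ := quad_bound (n := n) A
  obtain ⟨KB, hKB0, hKB⟩ := quad_bound (n := n) B
  have hLip : ∀ μ ν : ℝ, f μ ≤ f ν + |μ - ν| * (KA + KB) := by
    intro μ ν
    obtain ⟨x, hx1, hx2, hx3⟩ := hattain ν
    have h1 : f μ * dRe x ≤ quadRe (Mc μ) x :=
      lmin_mul_dRe_le_quadRe hn (combo_isHermitian hA hB μ) x
    rw [dRe_of_unit hx1, mul_one] at h1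
    have h2 : quadRe (Mc μ) x = f ν + (μ - ν) * (quadRe B x - quadRe A x) := by
      rw [hcombo μ x, ← hx3, hcombo ν x]; ring
    have hbA := hKA x hx1
    have hbB := hKB x hx1
    rw [abs_le] at hbA hbB
    have h3 : (μ - ν) * (quadRe B x - quadRe A x) ≤ |μ - ν| * (KA + KB) := by
      rcases le_total 0 (μ - ν) with h | h
      · rw [abs_of_nonneg h]
        nlinarith
      · rw [abs_of_nonpos h]
        nlinarith
    linarith
  have hcont : Continuous f := by
    have hlw : LipschitzWith ⟨KA + KB, by positivity⟩ f := by
      apply LipschitzWith.of_dist_le_mul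
      intro μ ν
      rw [Real.dist_eq, Real.dist_eq]
      show |f μ - f ν| ≤ (KA + KB) * |μ - ν|
      have h1 := hLip μ ν
      have h2 := hLip ν μ
      rw [abs_sub_comm ν μ] at h2
      rw [abs_sub_le_iff]
      constructor <;> linarith
    exact hlw.continuous
  obtain ⟨μs, hμs, hmax⟩ := isCompact_Icc.exists_isMaxOn
    (Set.nonempty_Icc.mpr zero_le_one) hcont.continuousOn
  have hmax' : ∀ μ ∈ Set.Icc (0 : ℝ) 1, f μ ≤ f μs := fun μ hμ => hmax hμ
  set L := f μs with hLdef
  set D := B - A with hD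
  have hABD : ∀ x : Fin n → ℂ, quadRe (A - B) x = - quadRe D x := by
    intro x
    rw [hD, quadRe_sub, quadRe_sub]; ring
  have hMD : ∀ (μ : ℝ) (x : Fin n → ℂ),
      quadRe (Mc μ) x = quadRe (Mc μs) x + (μ - μs) * quadRe D x := by
    intro μ x
    rw [hcombo, hcombo, hD, quadRe_sub]; ring
  have hright : μs < 1 → ∃ p, star p ⬝ᵥ p = 1 ∧
      Mc μs *ᵥ p = ((L : ℝ) : ℂ) • p ∧ quadRe D p ≤ 0 := by
    intro h1
    apply perturb hn (combo_isHermitian hA hB μs) D (1 - μs) (by linarith)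
    intro ε hε hε'
    obtain ⟨x, hx1, _, hx3⟩ := hattain (μs + ε)
    refine ⟨x, hx1, ?_⟩
    have h2 : quadRe (Mc μs) x + ε * quadRe D x = quadRe (Mc (μs + ε)) x := by
      rw [hMD (μs + ε) x]; ring
    have h4 : f (μs + ε) ≤ L := hmax' _ ⟨by linarith [hμs.1], by linarith⟩
    rw [h2, hx3]
    exact h4
  have hleft : 0 < μs → ∃ p, star p ⬝ᵥ p = 1 ∧
      Mc μs *ᵥ p = ((L : ℝ) : ℂ) • p ∧ quadRe (A - B) p ≤ 0 := by
    intro h1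
    apply perturb hn (combo_isHermitian hA hB μs) (A - B) μs h1
    intro ε hε hε'
    obtain ⟨x, hx1, _, hx3⟩ := hattain (μs - ε)
    refine ⟨x, hx1, ?_⟩
    have h2 : quadRe (Mc μs) x + ε * quadRe (A - B) x = quadRe (Mc (μs - ε)) x := by
      rw [hMD (μs - ε) x, hABD]; ring
    have h4 : f (μs - ε) ≤ L := hmax' _ ⟨by linarith, by linarith [hμs.2]⟩
    rw [h2, hx3]
    exact h4
  have hunit_ne : ∀ p : Fin n → ℂ, star p ⬝ᵥ p = 1 → p ≠ 0 := by
    intro p hp h0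
    rw [h0] at hp
    simp at hp
  have hkey : ∃ x : Fin n → ℂ, x ≠ 0 ∧ Mc μs *ᵥ x = ((L : ℝ) : ℂ) • x ∧
      0 ≤ μs * quadRe D x ∧ (1 - μs) * quadRe D x ≤ 0 ∧
      (μs * quadRe D x = 0 ∨ (1 - μs) * quadRe D x = 0) := by
    rcases eq_or_lt_of_le hμs.1 with h0 | h0
    · -- μs = 0
      obtain ⟨p, hp1, hp2, hp3⟩ := hright (by rw [← h0]; norm_num)
      refine ⟨p, hunit_ne p hp1, hp2, by rw [← h0]; simp, ?_, Or.inl (by rw [← h0]; ring)⟩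
      rw [← h0]
      simpa using hp3
    rcases eq_or_lt_of_le hμs.2 with h1 | h1
    · -- μs = 1
      obtain ⟨p, hp1, hp2, hp3⟩ := hleft h0
      have hγ : 0 ≤ quadRe D p := by
        have := hABD p
        linarith
      refine ⟨p, hunit_ne p hp1, hp2, ?_, by rw [h1]; simp, Or.inr (by rw [h1]; ring)⟩
      rw [h1, one_mul]
      exact hγ
    · -- interior
      obtain ⟨pp, hpp1, hpp2, hpp3⟩ := hright h1
      obtain ⟨pm, hpm1, hpm2, hpm3'⟩ := hleft h0
      have hpm3 : 0 ≤ quadRe D pm := by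
        have := hABD pm
        linarith
      rcases eq_or_lt_of_le hpp3 with hppz | hpps
      · exact ⟨pp, hunit_ne pp hpp1, hpp2, by rw [hppz, mul_zero],
          by rw [hppz, mul_zero], Or.inl (by rw [hppz, mul_zero])⟩
      rcases eq_or_lt_of_le hpm3 with hpmz | hpms
      · exact ⟨pm, hunit_ne pm hpm1, hpm2, by rw [← hpmz, mul_zero],
          by rw [← hpmz, mul_zero], Or.inl (by rw [← hpmz, mul_zero])⟩
      -- strict signs: IVT along the segment
      set path : ℝ → (Fin n → ℂ) :=
        fun t => ((1 - t : ℝ) : ℂ) • pm + ((t : ℝ) : ℂ) • pp with hpath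
      have hpath_eig : ∀ t, Mc μs *ᵥ path t = ((L : ℝ) : ℂ) • path t := by
        intro t
        rw [hpath]
        simp only [mulVec_add, mulVec_smul, hpp2, hpm2]
        module
      have hGcont : Continuous fun t : ℝ => quadRe D (path t) := by
        apply (continuous_quadRe D).comp
        rw [hpath]
        apply Continuous.add
        · exact (Complex.continuous_ofReal.comp (continuous_const.sub continuous_id)).smul
            continuous_const
        · exact Complex.continuous_ofReal.smul continuous_const
      have hG0 : quadRe D (path 0) = quadRe D pm := by
        rw [hpath]; norm_num
      have hG1 : quadRe D (path 1) = quadRe D pp := by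
        rw [hpath]; norm_num
      have hmem0 : (0 : ℝ) ∈ Set.Icc (quadRe D (path 1)) (quadRe D (path 0)) := by
        rw [hG0, hG1]
        exact ⟨hpps.le, hpm3⟩
      obtain ⟨t, ht, hGt⟩ := intermediate_value_Icc' zero_le_one hGcont.continuousOn hmem0
      have hGt' : quadRe D (path t) = 0 := hGt
      refine ⟨path t, ?_, hpath_eig t, by rw [hGt', mul_zero],
        by rw [hGt', mul_zero], Or.inl (by rw [hGt', mul_zero])⟩
      -- path t ≠ 0
      intro h0x
      have ht0 : t ≠ 0 := by
        intro h
        rw [h] at h0x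
        have : pm = 0 := by
          have := h0x
          rw [hpath] at this
          simpa using this
        exact hunit_ne pm hpm1 this
      have ht1 : t ≠ 1 := by
        intro h
        rw [h] at h0x
        have : pp = 0 := by
          have := h0x
          rw [hpath] at this
          simpa using this
        exact hunit_ne pp hpp1 this
      have hppeq : pp = ((-(1 - t) / t : ℝ) : ℂ) • pm := by
        funext i
        have hcomp := congrFun h0x i
        rw [hpath] at hcomp
        simp only [Pi.add_apply, Pi.smul_apply, smul_eq_mul, Pi.zero_apply] at hcomp
        have htC : (t : ℂ) ≠ 0 := by exact_mod_cast ht0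
        simp only [Pi.smul_apply, smul_eq_mul]
        push_cast at hcomp ⊢
        field_simp
        linear_combination hcomp
      have : quadRe D pp = (-(1 - t) / t) ^ 2 * quadRe D pm := by
        rw [hppeq, quadRe_real_smul]
      have hcne : (-(1 - t) / t) ≠ 0 := by
        intro h
        apply ht1
        have : 1 - t = 0 := by
          field_simp at h
          linarith
        linarith
      nlinarith [sq_pos_of_ne_zero hcne]
  obtain ⟨x, hx0, hxeig, hc1, hc2, hc3⟩ := hkey
  have hd := dRe_pos hx0
  have hqM : quadRe (Mc μs) x = L * dRe x := quadRe_of_eigen _ hxeig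
  have hγeq : quadRe D x = quadRe B x - quadRe A x := by rw [hD, quadRe_sub]
  have h1 := hcombo μs x
  rw [hqM] at h1
  have hqA : quadRe A x = L * dRe x - μs * quadRe D x := by
    linear_combination (-1 : ℝ) * h1 + μs * hγeq
  have hqB : quadRe B x = L * dRe x + (1 - μs) * quadRe D x := by
    linear_combination (-1 : ℝ) * h1 + (μs - 1) * hγeq
  have hmaxval : max (rayleigh A x) (rayleigh B x) = L := by
    rw [rayleigh_eq A, rayleigh_eq B]
    exact maxhelper hd hqA hqB hc1 hc2 hc3
  refine ⟨μs, hμs, fun μ hμ => hmax' μ hμ, ?_⟩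
  show L = sInf {r : ℝ | ∃ x : Fin n → ℂ, x ≠ 0 ∧ r = max (rayleigh A x) (rayleigh B x)}
  have hmem : L ∈ {r : ℝ | ∃ x : Fin n → ℂ, x ≠ 0 ∧ r = max (rayleigh A x) (rayleigh B x)} :=
    ⟨x, hx0, hmaxval.symm⟩
  have hlb : ∀ r ∈ {r : ℝ | ∃ x : Fin n → ℂ, x ≠ 0 ∧ r = max (rayleigh A x) (rayleigh B x)},
      L ≤ r := by
    rintro r ⟨z, hz0, rfl⟩
    have hdz := dRe_pos hz0
    have h1 : L * dRe z ≤ quadRe (Mc μs) z :=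
      lmin_mul_dRe_le_quadRe hn (combo_isHermitian hA hB μs) z
    have h2 := hcombo μs z
    have hA' : quadRe A z = rayleigh A z * dRe z := by
      rw [rayleigh_eq]
      field_simp
    have hB' : quadRe B z = rayleigh B z * dRe z := by
      rw [rayleigh_eq]
      field_simp
    set m := max (rayleigh A z) (rayleigh B z) with hm
    have h5 : rayleigh A z ≤ m := le_max_left _ _
    have h6 : rayleigh B z ≤ m := le_max_right _ _
    have hq : quadRe (Mc μs) z ≤ m * dRe z := by
      rw [h2, hA', hB']
      nlinarith [mul_nonneg (mul_nonneg (sub_nonneg.2 h5) hdz.le) (sub_nonneg.2 hμs.2),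
        mul_nonneg (mul_nonneg (sub_nonneg.2 h6) hdz.le) hμs.1]
    have : L * dRe z ≤ m * dRe z := le_trans h1 hq
    exact le_of_mul_le_mul_right (by linarith) hdz
  exact le_antisymm (le_csInf ⟨_, hmem⟩ hlb) (csInf_le ⟨L, hlb⟩ hmem)
end
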